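/- arXiv:2412.08413 — 5 statements merged into one kernel-verified Lean document; each statement's English description precedes it below -/
import Mathlib

section
/- For subsets S ⊆ T ⊆ [n-1], the set of permutations w ∈ S_n with S ⊆ Des_R(w) ⊆ T is exactly the left weak Bruhat interval [w₀(S), w₁(T)]_L, where w₀(S) is the longest element of the parabolic subgroup S_S and w₁(T) is the longest element of S^{Tᶜ}. -/
/-- The adjacent transposition `s_i` of `Fin n` (0-indexed), swapping `i` and `i+1`. -/
def adj (n i : ℕ) (h : i + 1 < n) : Equiv.Perm (Fin n) :=
  Equiv.swap ⟨i, Nat.lt_of_succ_lt h⟩ ⟨i + 1, h⟩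

/-- A permutation is an adjacent transposition. -/
def IsAdj (n : ℕ) (π : Equiv.Perm (Fin n)) : Prop :=
  ∃ i, ∃ h : i + 1 < n, π = adj n i h

/-- Coxeter length: the minimal number of adjacent transpositions needed to express `σ`. -/
noncomputable def len {n : ℕ} (σ : Equiv.Perm (Fin n)) : ℕ :=
  sInf {k | ∃ l : List (Equiv.Perm (Fin n)),
    (∀ π ∈ l, IsAdj n π) ∧ l.prod = σ ∧ l.length = k}

/-- The left descent set of `σ` (0-indexed). -/
def DesL {n : ℕ} (σ : Equiv.Perm (Fin n)) : Set ℕ :=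
  {i | ∃ h : i + 1 < n, len (adj n i h * σ) < len σ}

/-- The right descent set of `σ` (0-indexed). -/
def DesR {n : ℕ} (σ : Equiv.Perm (Fin n)) : Set ℕ :=
  {i | ∃ h : i + 1 < n, len (σ * adj n i h) < len σ}

/-- Covering relation of the left weak Bruhat order: `σ ⋖ s_i σ` for `i ∉ Des_L(σ)`. -/
def covL {n : ℕ} (σ ρ : Equiv.Perm (Fin n)) : Prop :=
  ∃ i, ∃ h : i + 1 < n, i ∉ DesL σ ∧ ρ = adj n i h * σ

/-- The left weak Bruhat order. -/
def leL {n : ℕ} (σ ρ : Equiv.Perm (Fin n)) : Prop :=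
  Relation.ReflTransGen covL σ ρ

/-- Covering relation of the right weak Bruhat order: `σ ⋖ σ s_i` for `i ∉ Des_R(σ)`. -/
def covR {n : ℕ} (σ ρ : Equiv.Perm (Fin n)) : Prop :=
  ∃ i, ∃ h : i + 1 < n, i ∉ DesR σ ∧ ρ = σ * adj n i h

/-- The right weak Bruhat order. -/
def leR {n : ℕ} (σ ρ : Equiv.Perm (Fin n)) : Prop :=
  Relation.ReflTransGen covR σ ρ

/-- The left weak Bruhat interval `[σ, ρ]_L`. -/
def intervalL {n : ℕ} (σ ρ : Equiv.Perm (Fin n)) : Set (Equiv.Perm (Fin n)) :=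
  {γ | leL σ γ ∧ leL γ ρ}

/-- The right weak Bruhat interval `[σ, ρ]_R`. -/
def intervalR {n : ℕ} (σ ρ : Equiv.Perm (Fin n)) : Set (Equiv.Perm (Fin n)) :=
  {γ | leR σ γ ∧ leR γ ρ}

/-- The parabolic subgroup of `S_n` generated by `{s_i | i ∈ S}`. -/
def parabolic (n : ℕ) (S : Set ℕ) : Subgroup (Equiv.Perm (Fin n)) :=
  Subgroup.closure {π | ∃ i ∈ S, ∃ h : i + 1 < n, π = adj n i h}

/-- `w` is a longest element of the set `A` of permutations. -/
def IsLongestIn {n : ℕ} (A : Set (Equiv.Perm (Fin n))) (w : Equiv.Perm (Fin n)) : Prop :=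
  w ∈ A ∧ ∀ u ∈ A, len u ≤ len w

namespace BW
variable {n : ℕ}

def lo (i : ℕ) (h : i + 1 < n) : Fin n := ⟨i, Nat.lt_of_succ_lt h⟩
def hi (i : ℕ) (h : i + 1 < n) : Fin n := ⟨i + 1, h⟩

lemma lo_lt_hi {i : ℕ} (h : i + 1 < n) : lo i h < hi i h := by simp [lo, hi, Fin.lt_def]

lemma adj_eq (i : ℕ) (h : i + 1 < n) : adj n i h = Equiv.swap (lo i h) (hi i h) := rfl

lemma adj_lo {i : ℕ} (h : i + 1 < n) : adj n i h (lo i h) = hi i h := by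
  rw [adj_eq]; exact Equiv.swap_apply_left _ _

lemma adj_hi {i : ℕ} (h : i + 1 < n) : adj n i h (hi i h) = lo i h := by
  rw [adj_eq]; exact Equiv.swap_apply_right _ _

lemma adj_mul_self (i : ℕ) (h : i + 1 < n) : adj n i h * adj n i h = 1 := by
  rw [adj_eq]; exact Equiv.swap_mul_self _ _

lemma adj_inv (i : ℕ) (h : i + 1 < n) : (adj n i h)⁻¹ = adj n i h := by
  rw [adj_eq]; exact Equiv.swap_inv _ _

lemma adj_lt {i : ℕ} (h : i + 1 < n) {x y : Fin n} (hxy : x < y)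
    (hne : ¬(x.val = i ∧ y.val = i + 1)) : adj n i h x < adj n i h y := by
  rw [adj_eq]
  simp only [Equiv.swap_apply_def]
  rw [Fin.lt_def] at hxy ⊢
  split_ifs with e1 e2 e3 e4 e5 e6 <;>
    simp only [Fin.ext_iff, lo, hi, Fin.lt_def] at * <;> omega

lemma adj_lt_iff {i : ℕ} (h : i + 1 < n) {x y : Fin n}
    (h1 : ¬(x.val = i ∧ y.val = i + 1)) (h2 : ¬(y.val = i ∧ x.val = i + 1)) :
    adj n i h x < adj n i h y ↔ x < y := by
  constructor
  · intro hl
    rcases lt_trichotomy x y with h' | h' | h'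
    · exact h'
    · subst h'; exact absurd hl (lt_irrefl _)
    · exact absurd (adj_lt h h' h2) (not_lt.2 hl.le)
  · intro hxy; exact adj_lt h hxy h1

end BW

open Finset in
def Invs {n : ℕ} (σ : Equiv.Perm (Fin n)) : Finset (Fin n × Fin n) :=
  Finset.univ.filter (fun p => p.1 < p.2 ∧ σ p.2 < σ p.1)

namespace BW2
open BW
variable {n : ℕ}

lemma mem_Invs {σ : Equiv.Perm (Fin n)} {p : Fin n × Fin n} :
    p ∈ Invs σ ↔ p.1 < p.2 ∧ σ p.2 < σ p.1 := by simp [Invs]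

lemma mem_Invs_pair {σ : Equiv.Perm (Fin n)} {p q : Fin n} :
    (p, q) ∈ Invs σ ↔ p < q ∧ σ q < σ p := by simp [Invs]

noncomputable def invc {n : ℕ} (σ : Equiv.Perm (Fin n)) : ℕ := (Invs σ).card

lemma Invs_one : Invs (1 : Equiv.Perm (Fin n)) = ∅ := by
  ext p; simp only [mem_Invs, Finset.notMem_empty, iff_false, not_and]
  intro h; simp only [Equiv.Perm.one_apply]; exact not_lt.2 h.le

lemma Invs_adj_mul_asc {σ : Equiv.Perm (Fin n)} {i : ℕ} (h : i + 1 < n)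
    (hpq : σ⁻¹ (lo i h) < σ⁻¹ (hi i h)) :
    Invs (adj n i h * σ) = insert (σ⁻¹ (lo i h), σ⁻¹ (hi i h)) (Invs σ) ∧
      (σ⁻¹ (lo i h), σ⁻¹ (hi i h)) ∉ Invs σ := by
  set p := σ⁻¹ (lo i h) with hp
  set q := σ⁻¹ (hi i h) with hq
  have hsp : σ p = lo i h := by rw [hp]; simp
  have hsq : σ q = hi i h := by rw [hq]; simp
  have hnm : (p, q) ∉ Invs σ := by
    rw [mem_Invs]
    intro ⟨_, hc⟩
    rw [hsp, hsq] at hc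
    exact absurd (lo_lt_hi h) (not_lt.2 hc.le)
  refine ⟨?_, hnm⟩
  ext ⟨a, b⟩
  simp only [mem_Invs, Finset.mem_insert, Prod.mk.injEq, Equiv.Perm.mul_apply]
  by_cases hab : a = p ∧ b = q
  · obtain ⟨rfl, rfl⟩ := hab
    simp only [hsp, hsq, adj_lo, adj_hi]
    exact ⟨fun _ => Or.inl (by simp), fun _ => ⟨hpq, lo_lt_hi h⟩⟩
  · have hcond1 : ¬((σ a).val = i ∧ (σ b).val = i + 1) := by
      intro ⟨ha, hb⟩
      exact hab ⟨σ.injective (hsp ▸ Fin.ext ha), σ.injective (hsq ▸ Fin.ext hb)⟩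
    have hcond2 : ¬((σ b).val = i ∧ (σ a).val = i + 1) → a < b →
        ((adj n i h) (σ b) < (adj n i h) (σ a) ↔ σ b < σ a) := by
      intro hc hab'
      exact adj_lt_iff h hc hcond1
    have hcond2' : a < b → ¬((σ b).val = i ∧ (σ a).val = i + 1) := by
      intro hab' ⟨hb, ha⟩
      have e1 : b = p := σ.injective (hsp ▸ Fin.ext hb)
      have e2 : a = q := σ.injective (hsq ▸ Fin.ext ha)
      rw [e1, e2] at hab'
      exact absurd hpq (not_lt.2 hab'.le)
    constructor
    · rintro ⟨h1, h2⟩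
      exact Or.inr ⟨h1, ((hcond2 (hcond2' h1) h1).1 h2)⟩
    · rintro (⟨rfl, rfl⟩ | ⟨h1, h2⟩)
      · exact absurd ⟨rfl, rfl⟩ hab
      · exact ⟨h1, (hcond2 (hcond2' h1) h1).2 h2⟩

lemma invc_adj_mul_asc {σ : Equiv.Perm (Fin n)} {i : ℕ} (h : i + 1 < n)
    (hpq : σ⁻¹ (lo i h) < σ⁻¹ (hi i h)) :
    invc (adj n i h * σ) = invc σ + 1 := by
  obtain ⟨h1, h2⟩ := Invs_adj_mul_asc h hpq
  rw [invc, h1, Finset.card_insert_of_notMem h2, invc]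

lemma Invs_adj_mul_desc {σ : Equiv.Perm (Fin n)} {i : ℕ} (h : i + 1 < n)
    (hqp : σ⁻¹ (hi i h) < σ⁻¹ (lo i h)) :
    Invs σ = insert (σ⁻¹ (hi i h), σ⁻¹ (lo i h)) (Invs (adj n i h * σ)) ∧
      (σ⁻¹ (hi i h), σ⁻¹ (lo i h)) ∉ Invs (adj n i h * σ) := by
  set τ := adj n i h * σ with hτ
  have hτσ : adj n i h * τ = σ := by
    rw [hτ, ← mul_assoc, adj_mul_self, one_mul]
  have hτinv : τ⁻¹ = σ⁻¹ * adj n i h := by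
    rw [hτ, mul_inv_rev, adj_inv]
  have e1 : τ⁻¹ (lo i h) = σ⁻¹ (hi i h) := by
    rw [hτinv]; simp only [Equiv.Perm.mul_apply, adj_lo]
  have e2 : τ⁻¹ (hi i h) = σ⁻¹ (lo i h) := by
    rw [hτinv]; simp only [Equiv.Perm.mul_apply, adj_hi]
  have := Invs_adj_mul_asc h (σ := τ) (by rw [e1, e2]; exact hqp)
  rw [hτσ, e1, e2] at this
  exact this

lemma invc_adj_mul_desc {σ : Equiv.Perm (Fin n)} {i : ℕ} (h : i + 1 < n)
    (hqp : σ⁻¹ (hi i h) < σ⁻¹ (lo i h)) :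
    invc σ = invc (adj n i h * σ) + 1 := by
  obtain ⟨h1, h2⟩ := Invs_adj_mul_desc h hqp
  rw [invc, h1, Finset.card_insert_of_notMem h2, invc]

lemma inv_lo_ne_inv_hi (σ : Equiv.Perm (Fin n)) {i : ℕ} (h : i + 1 < n) :
    σ⁻¹ (lo i h) ≠ σ⁻¹ (hi i h) :=
  fun hc => absurd (σ⁻¹.injective hc) (ne_of_lt (lo_lt_hi h))

lemma invc_adj_mul_le {σ : Equiv.Perm (Fin n)} {i : ℕ} (h : i + 1 < n) :
    invc (adj n i h * σ) ≤ invc σ + 1 := by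
  rcases lt_or_gt_of_ne (inv_lo_ne_inv_hi σ h) with hlt | hgt
  · exact le_of_eq (invc_adj_mul_asc h hlt)
  · rw [invc_adj_mul_desc h hgt]; omega

lemma invc_adj_mul_lt_iff {σ : Equiv.Perm (Fin n)} {i : ℕ} (h : i + 1 < n) :
    invc (adj n i h * σ) < invc σ ↔ σ⁻¹ (hi i h) < σ⁻¹ (lo i h) := by
  rcases lt_or_gt_of_ne (inv_lo_ne_inv_hi σ h) with hlt | hgt
  · rw [invc_adj_mul_asc h hlt]
    simp only [Nat.lt_irrefl, Nat.add_one]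
    constructor
    · omega
    · intro hc; exact absurd hlt (not_lt.2 hc.le)
  · rw [invc_adj_mul_desc h hgt]
    constructor
    · intro _; exact hgt
    · intro _; omega

end BW2

namespace BW3
open BW BW2
variable {n : ℕ}

set_option linter.deprecated false in
lemma perm_strictMono_eq_one {σ : Equiv.Perm (Fin n)} (h : StrictMono σ) : σ = 1 := by
  have hr : Set.range σ = Set.range (id : Fin n → Fin n) := by
    rw [σ.surjective.range_eq, Set.range_id]
  have := (StrictMono.range_inj h strictMono_id).1 hr
  ext x
  rw [congrFun this x]; rfl

lemma eq_one_of_no_descent {σ : Equiv.Perm (Fin n)}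
    (h : ∀ (i : ℕ) (hh : i + 1 < n), σ (lo i hh) < σ (hi i hh)) : σ = 1 := by
  cases n with
  | zero => ext x; exact absurd x.isLt (Nat.not_lt_zero _)
  | succ m =>
    apply perm_strictMono_eq_one
    rw [Fin.strictMono_iff_lt_succ]
    intro i
    have hh : (i : ℕ) + 1 < m + 1 := by omega
    have e1 : Fin.castSucc i = lo (i : ℕ) hh := by
      apply Fin.ext; simp [lo]
    have e2 : i.succ = hi (i : ℕ) hh := by
      apply Fin.ext; simp [hi]
    rw [e1, e2]
    exact h i hh

lemma exists_descent {σ : Equiv.Perm (Fin n)} (h : σ ≠ 1) :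
    ∃ (i : ℕ) (hh : i + 1 < n), σ⁻¹ (hi i hh) < σ⁻¹ (lo i hh) := by
  by_contra hc
  push_neg at hc
  apply h
  have : σ⁻¹ = 1 := by
    apply eq_one_of_no_descent
    intro i hh
    rcases lt_or_gt_of_ne (inv_lo_ne_inv_hi σ hh) with hlt | hgt
    · exact hlt
    · exact absurd hgt (not_lt.2 (hc i hh))
  rw [← inv_inv σ, this, inv_one]

lemma exists_word (k : ℕ) : ∀ (σ : Equiv.Perm (Fin n)), invc σ = k →
    ∃ l : List (Equiv.Perm (Fin n)),
      (∀ π ∈ l, IsAdj n π) ∧ l.prod = σ ∧ l.length = k := by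
  induction k using Nat.strongRecOn with
  | ind k ih =>
    intro σ hk
    by_cases h1 : σ = 1
    · subst h1
      have : k = 0 := by rw [← hk, invc, Invs_one, Finset.card_empty]
      subst this
      exact ⟨[], by simp, by simp, rfl⟩
    · obtain ⟨i, hh, hd⟩ := exists_descent h1
      have hdec := invc_adj_mul_desc hh hd
      have hklt : invc (adj n i hh * σ) < k := by omega
      obtain ⟨l, hl1, hl2, hl3⟩ := ih _ hklt (adj n i hh * σ) rfl
      refine ⟨adj n i hh :: l, ?_, ?_, ?_⟩
      · intro π hπ
        rcases List.mem_cons.1 hπ with rfl | hm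
        · exact ⟨i, hh, rfl⟩
        · exact hl1 π hm
      · rw [List.prod_cons, hl2, ← mul_assoc, adj_mul_self, one_mul]
      · simp [hl3]; omega

lemma len_eq_invc (σ : Equiv.Perm (Fin n)) : len σ = invc σ := by
  apply le_antisymm
  · obtain ⟨l, h1, h2, h3⟩ := exists_word (invc σ) σ rfl
    exact Nat.sInf_le ⟨l, h1, h2, h3⟩
  · have hne : {k | ∃ l : List (Equiv.Perm (Fin n)),
        (∀ π ∈ l, IsAdj n π) ∧ l.prod = σ ∧ l.length = k}.Nonempty := by
      obtain ⟨l, h1, h2, h3⟩ := exists_word (invc σ) σ rfl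
      exact ⟨invc σ, l, h1, h2, h3⟩
    obtain ⟨l, h1, h2, h3⟩ := Nat.sInf_mem hne
    rw [len, ← h3, ← h2]
    clear h2 h3
    induction l with
    | nil => simp [invc, Invs_one]
    | cons a l ihl =>
      have ha : IsAdj n a := h1 a List.mem_cons_self
      obtain ⟨i, hh, rfl⟩ := ha
      rw [List.prod_cons]
      calc invc (adj n i hh * l.prod) ≤ invc l.prod + 1 := invc_adj_mul_le hh
        _ ≤ l.length + 1 := by
            have := ihl (fun π hπ => h1 π (List.mem_cons_of_mem _ hπ))
            omega
        _ = (adj n i hh :: l).length := by simp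

lemma invc_inv (σ : Equiv.Perm (Fin n)) : invc σ⁻¹ = invc σ := by
  rw [invc, invc]
  apply Finset.card_nbij' (fun x => (σ⁻¹ x.2, σ⁻¹ x.1)) (fun x => (σ x.2, σ x.1))
  · intro x hx
    rw [Finset.mem_coe, mem_Invs] at hx ⊢
    simp only [Equiv.Perm.inv_def, Equiv.apply_symm_apply]
    exact ⟨hx.2, hx.1⟩
  · intro x hx
    rw [Finset.mem_coe, mem_Invs] at hx ⊢
    simp only [Equiv.Perm.inv_def, Equiv.symm_apply_apply]
    exact ⟨hx.2, hx.1⟩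
  · intro x _; simp
  · intro x _; simp

lemma mem_DesR_iff {σ : Equiv.Perm (Fin n)} {i : ℕ} :
    i ∈ DesR σ ↔ ∃ hh : i + 1 < n, σ (hi i hh) < σ (lo i hh) := by
  unfold DesR
  simp only [Set.mem_setOf_eq]
  apply exists_congr
  intro hh
  have e1 : σ * adj n i hh = (adj n i hh * σ⁻¹)⁻¹ := by
    rw [mul_inv_rev, inv_inv, adj_inv]
  rw [e1, len_eq_invc, len_eq_invc, invc_inv, ← invc_inv σ]
  rw [invc_adj_mul_lt_iff hh]
  simp only [inv_inv]

lemma mem_DesL_iff {σ : Equiv.Perm (Fin n)} {i : ℕ} :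
    i ∈ DesL σ ↔ ∃ hh : i + 1 < n, σ⁻¹ (hi i hh) < σ⁻¹ (lo i hh) := by
  unfold DesL
  simp only [Set.mem_setOf_eq]
  apply exists_congr
  intro hh
  rw [len_eq_invc, len_eq_invc, invc_adj_mul_lt_iff hh]

lemma Invs_inj {σ ρ : Equiv.Perm (Fin n)} (h : Invs σ = Invs ρ) : σ = ρ := by
  have key : ∀ a b : Fin n, σ a < σ b → ρ a < ρ b := by
    intro a b hab
    rcases lt_trichotomy a b with h' | h' | h'
    · by_contra hc
      rcases eq_or_lt_of_le (not_lt.1 hc) with he | hlt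
      · exact absurd (ρ.injective he.symm) (ne_of_lt h')
      · have : (a, b) ∈ Invs ρ := mem_Invs.2 ⟨h', hlt⟩
        rw [← h, mem_Invs] at this
        exact absurd hab (not_lt.2 this.2.le)
    · subst h'; exact absurd hab (lt_irrefl _)
    · have : (b, a) ∈ Invs σ := mem_Invs.2 ⟨h', hab⟩
      rw [h, mem_Invs] at this
      exact this.2
  have hg : StrictMono (ρ * σ⁻¹ : Equiv.Perm (Fin n)) := by
    intro x y hxy
    simp only [Equiv.Perm.mul_apply]
    apply key
    simpa using hxy
  have h1 : (ρ * σ⁻¹ : Equiv.Perm (Fin n)) = 1 := perm_strictMono_eq_one hg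
  have := mul_inv_eq_one.1 h1
  exact this.symm

end BW3

namespace BW4
open BW BW2 BW3
variable {n : ℕ}

lemma covL_subset {σ ρ : Equiv.Perm (Fin n)} (h : covL σ ρ) : Invs σ ⊆ Invs ρ := by
  obtain ⟨i, hh, hnd, rfl⟩ := h
  rcases lt_or_gt_of_ne (inv_lo_ne_inv_hi σ hh) with hlt | hgt
  · rw [(Invs_adj_mul_asc hh hlt).1]; exact Finset.subset_insert _ _
  · exact absurd (mem_DesL_iff.2 ⟨hh, hgt⟩) hnd

lemma leL_subset {σ ρ : Equiv.Perm (Fin n)} (h : leL σ ρ) : Invs σ ⊆ Invs ρ := by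
  induction h with
  | refl => exact subset_rfl
  | tail _ h2 ih => exact ih.trans (covL_subset h2)

lemma nonmem_Invs {σ : Equiv.Perm (Fin n)} {x y : Fin n} (hxy : x < y)
    (h : (x, y) ∉ Invs σ) : σ x < σ y := by
  rw [mem_Invs] at h
  push_neg at h
  rcases lt_or_eq_of_le (h hxy) with h' | h'
  · exact h'
  · exact absurd (σ.injective h') (ne_of_lt hxy)

lemma leL_of_subset : ∀ (k : ℕ) (σ ρ : Equiv.Perm (Fin n)), (Invs ρ \ Invs σ).card = k →
    Invs σ ⊆ Invs ρ → leL σ ρ := by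
  intro k
  induction k using Nat.strongRecOn with
  | ind k ih =>
    intro σ ρ hk hsub
    rcases Finset.eq_empty_or_nonempty (Invs ρ \ Invs σ) with he | hne
    · have hsup : Invs ρ ⊆ Invs σ := by
        intro x hx
        by_contra hc
        exact (Finset.eq_empty_iff_forall_notMem.1 he x) (Finset.mem_sdiff.2 ⟨hx, hc⟩)
      rw [Invs_inj (subset_antisymm hsub hsup)]
      exact Relation.ReflTransGen.refl
    · obtain ⟨⟨a, b⟩, hab, hmin⟩ :=
        Finset.exists_min_image _ (fun p => ((σ p.2).val - (σ p.1).val)) hne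
      rw [Finset.mem_sdiff, mem_Invs] at hab
      obtain ⟨⟨hab1, hab2⟩, hab4⟩ := hab
      have hab3 : σ a < σ b := nonmem_Invs hab1 hab4
      have haρ : (a, b) ∈ Invs ρ := mem_Invs.2 ⟨hab1, hab2⟩
      have hcons : (σ b).val = (σ a).val + 1 := by
        by_contra hg
        have hgap : (σ a).val + 1 < (σ b).val := by
          have := (Fin.lt_def.1 hab3); omega
        set c : Fin n := ⟨(σ a).val + 1, lt_trans hgap (σ b).isLt⟩ with hc
        set m := σ⁻¹ c with hm
        have hσm : σ m = c := by rw [hm]; simp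
        have hσac : σ a < c := by rw [Fin.lt_def]; simp [hc]
        have hσcb : c < σ b := by rw [Fin.lt_def]; exact hgap
        have hma : m ≠ a := fun hc' => by
          rw [hc'] at hσm; exact absurd hσm (ne_of_lt hσac)
        have hmb : m ≠ b := fun hc' => by
          rw [hc'] at hσm; exact absurd hσm (ne_of_gt hσcb)
        have new : ∃ x y : Fin n, (x, y) ∈ Invs ρ \ Invs σ ∧
            (σ y).val - (σ x).val < (σ b).val - (σ a).val := by
          rcases lt_trichotomy m a with h1 | h1 | h1
          · -- m < a : use (m, b)
            have hma' : (m, a) ∈ Invs σ := mem_Invs.2 ⟨h1, hσm ▸ hσac⟩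
            have hρ : ρ a < ρ m := (mem_Invs.1 (hsub hma')).2
            refine ⟨m, b, Finset.mem_sdiff.2 ⟨mem_Invs.2 ⟨h1.trans hab1, hab2.trans hρ⟩, ?_⟩, ?_⟩
            · rw [mem_Invs]; push_neg
              intro _; rw [hσm]; exact hσcb.le
            · rw [hσm]; rw [Fin.lt_def] at hab3; simp [hc]; omega
          · exact absurd h1 hma
          · rcases lt_trichotomy m b with h2 | h2 | h2
            · by_cases hρ : ρ m < ρ a
              · refine ⟨a, m, Finset.mem_sdiff.2 ⟨mem_Invs.2 ⟨h1, hρ⟩, ?_⟩, ?_⟩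
                · rw [mem_Invs]; push_neg
                  intro _; rw [hσm]; exact hσac.le
                · rw [hσm]; rw [Fin.lt_def] at hab3; simp [hc]; omega
              · have hρ' : ρ a < ρ m := by
                  rcases lt_or_eq_of_le (not_lt.1 hρ) with h' | h'
                  · exact h'
                  · exact absurd (ρ.injective h') (ne_of_lt h1)
                refine ⟨m, b, Finset.mem_sdiff.2 ⟨mem_Invs.2 ⟨h2, hab2.trans hρ'⟩, ?_⟩, ?_⟩
                · rw [mem_Invs]; push_neg
                  intro _; rw [hσm]; exact hσcb.le
                · rw [hσm]; rw [Fin.lt_def] at hab3; simp [hc]; omega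
            · exact absurd h2 hmb
            · -- b < m : use (a, m)
              have hbm : (b, m) ∈ Invs σ := mem_Invs.2 ⟨h2, hσm ▸ hσcb⟩
              have hρ : ρ m < ρ b := (mem_Invs.1 (hsub hbm)).2
              refine ⟨a, m, Finset.mem_sdiff.2
                ⟨mem_Invs.2 ⟨hab1.trans h2, hρ.trans hab2⟩, ?_⟩, ?_⟩
              · rw [mem_Invs]; push_neg
                intro _; rw [hσm]; exact hσac.le
              · rw [hσm]; rw [Fin.lt_def] at hab3; simp [hc]; omega
        obtain ⟨x, y, hxy1, hxy2⟩ := new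
        exact absurd (hmin (x, y) hxy1) (not_le.2 hxy2)
      -- now σ b = σ a + 1 in values
      set v := (σ a).val with hv
      have hvn : v + 1 < n := by
        have := (σ b).isLt; omega
      have hlo : σ a = lo v hvn := Fin.ext rfl
      have hhi : σ b = hi v hvn := Fin.ext hcons
      have hinvlo : σ⁻¹ (lo v hvn) = a := by rw [← hlo]; simp
      have hinvhi : σ⁻¹ (hi v hvn) = b := by rw [← hhi]; simp
      have hstep : covL σ (adj n v hvn * σ) := by
        refine ⟨v, hvn, ?_, rfl⟩
        rw [mem_DesL_iff]
        rintro ⟨hh, hcc⟩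
        have e1 : hi v hh = hi v hvn := rfl
        have e2 : lo v hh = lo v hvn := rfl
        rw [e1, e2, hinvlo, hinvhi] at hcc
        exact absurd hab1 (not_lt.2 hcc.le)
      have hasc := Invs_adj_mul_asc hvn (σ := σ) (by rw [hinvlo, hinvhi]; exact hab1)
      rw [hinvlo, hinvhi] at hasc
      have hsub' : Invs (adj n v hvn * σ) ⊆ Invs ρ := by
        rw [hasc.1]
        exact Finset.insert_subset haρ hsub
      have hcard : (Invs ρ \ Invs (adj n v hvn * σ)).card < k := by
        rw [hasc.1, Finset.sdiff_insert]
        have hmem : (a, b) ∈ Invs ρ \ Invs σ := Finset.mem_sdiff.2 ⟨haρ, hab4⟩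
        have hpos : 0 < k := by
          rw [← hk]; exact Finset.card_pos.2 ⟨_, hmem⟩
        calc ((Invs ρ \ Invs σ).erase (a, b)).card < (Invs ρ \ Invs σ).card :=
              Finset.card_erase_lt_of_mem hmem
          _ = k := hk
      exact Relation.ReflTransGen.head hstep (ih _ hcard _ _ rfl hsub')

lemma leL_iff {σ ρ : Equiv.Perm (Fin n)} : leL σ ρ ↔ Invs σ ⊆ Invs ρ :=
  ⟨leL_subset, fun h => leL_of_subset _ σ ρ rfl h⟩

end BW4

namespace BW5
open BW BW2 BW3 BW4
variable {n : ℕ}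

open scoped Classical in
/-- number of elements of `D` strictly below `p` -/
noncomputable def cnt (D : Set ℕ) (p : ℕ) : ℕ := ((Finset.range p).filter (· ∈ D)).card

lemma cnt_mono (D : Set ℕ) {p q : ℕ} (h : p ≤ q) : cnt D p ≤ cnt D q := by
  classical
  unfold cnt
  apply Finset.card_le_card
  apply Finset.filter_subset_filter
  exact Finset.range_subset_range.2 h

lemma cnt_succ_mem (D : Set ℕ) {p : ℕ} (h : p ∈ D) : cnt D (p + 1) = cnt D p + 1 := by
  classical
  unfold cnt
  rw [Finset.range_add_one, Finset.filter_insert, if_pos h,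
    Finset.card_insert_of_notMem (by simp)]

lemma cnt_succ_not (D : Set ℕ) {p : ℕ} (h : p ∉ D) : cnt D (p + 1) = cnt D p := by
  classical
  unfold cnt
  rw [Finset.range_add_one, Finset.filter_insert, if_neg h]

lemma cnt_succ_eq_iff (D : Set ℕ) (p : ℕ) : cnt D (p + 1) = cnt D p ↔ p ∉ D := by
  by_cases h : p ∈ D
  · rw [cnt_succ_mem D h]; simp [h]
  · rw [cnt_succ_not D h]; simp [h]

lemma cnt_eq_of_no (D : Set ℕ) {p q : ℕ} (hpq : p ≤ q)
    (h : ∀ i, p ≤ i → i < q → i ∉ D) : cnt D p = cnt D q := by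
  induction q with
  | zero => rw [Nat.le_zero.1 hpq]
  | succ q ihq =>
    rcases Nat.lt_or_ge p (q + 1) with h1 | h1
    · have hpq' : p ≤ q := by omega
      rw [cnt_succ_not D (h q hpq' (by omega))]
      exact ihq hpq' (fun i h2 h3 => h i h2 (by omega))
    · have : p = q + 1 := by omega
      rw [this]

lemma notmem_of_cnt_eq (D : Set ℕ) {p q i : ℕ} (hc : cnt D p = cnt D q)
    (h1 : p ≤ i) (h2 : i < q) : i ∉ D := by
  have a1 : cnt D p ≤ cnt D i := cnt_mono D h1
  have a2 : cnt D (i + 1) ≤ cnt D q := cnt_mono D (by omega)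
  have a3 : cnt D i ≤ cnt D (i + 1) := cnt_mono D (by omega)
  have : cnt D (i + 1) = cnt D i := by omega
  exact (cnt_succ_eq_iff D i).1 this

lemma key_lt_key {a b x y : ℕ} (hx : x < n) (hy : y < n) :
    a * n + x < b * n + y ↔ a < b ∨ (a = b ∧ x < y) := by
  constructor
  · intro h
    rcases lt_trichotomy a b with h' | h' | h'
    · exact Or.inl h'
    · subst h'; right; exact ⟨rfl, by omega⟩
    · exfalso
      have h1 : (b + 1) * n ≤ a * n := Nat.mul_le_mul_right n (Nat.succ_le_of_lt h')
      rw [Nat.succ_mul] at h1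
      omega
  · rintro (h' | ⟨rfl, h'⟩)
    · have h1 : (a + 1) * n ≤ b * n := Nat.mul_le_mul_right n (Nat.succ_le_of_lt h')
      rw [Nat.succ_mul] at h1
      have h2 : a * n + x < a * n + n := Nat.add_lt_add_left hx _
      omega
    · omega

lemma key_inj {a b x y : ℕ} (hx : x < n) (hy : y < n)
    (h : a * n + x = b * n + y) : a = b ∧ x = y := by
  have h1 : ¬(a * n + x < b * n + y) := by omega
  have h2 : ¬(b * n + y < a * n + x) := by omega
  rw [key_lt_key hx hy] at h1
  rw [key_lt_key hy hx] at h2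
  push_neg at h1 h2
  have hab : a = b := le_antisymm h2.1 h1.1
  subst hab
  exact ⟨rfl, le_antisymm (h2.2 rfl) (h1.2 rfl)⟩

/-- permutation whose order agrees with an injective key -/
noncomputable def mkPerm (κ : Fin n → ℕ) : Equiv.Perm (Fin n) := (Tuple.sort κ)⁻¹

lemma mkPerm_lt_iff {κ : Fin n → ℕ} (hκ : Function.Injective κ) (x y : Fin n) :
    mkPerm κ x < mkPerm κ y ↔ κ x < κ y := by
  have hm : StrictMono (κ ∘ Tuple.sort κ) :=
    (Tuple.monotone_sort κ).strictMono_of_injective (hκ.comp (Tuple.sort κ).injective)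
  have := hm.lt_iff_lt (a := mkPerm κ x) (b := mkPerm κ y)
  rw [← this]
  unfold mkPerm
  simp only [Function.comp_apply, Equiv.Perm.inv_def, Equiv.apply_symm_apply]

lemma rank_eq (M : Equiv.Perm (Fin n)) (x : Fin n) :
    (Finset.univ.filter fun q => M q < M x).card = (M x).val := by
  have h1 : (Finset.univ.filter fun q => M q < M x).card
      = (Finset.univ.filter fun r => r < M x).card := by
    apply Finset.card_nbij (fun q => M q)
    · intro q hq; simp only [Finset.coe_filter, Finset.mem_univ, true_and, Set.mem_setOf_eq] at *; exact hq
    · intro q hq q' hq' h; exact M.injective h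
    · intro r hr
      simp only [Finset.coe_filter, Finset.mem_univ, true_and, Set.mem_setOf_eq] at *
      exact ⟨M⁻¹ r, by simpa using hr, by simp⟩
  rw [h1]
  have h2 : (Finset.univ.filter fun r => r < M x) = Finset.Iio (M x) := by
    ext r; simp
  rw [h2, Fin.card_Iio]

lemma card_le_lt (x : Fin n) : (Finset.univ.filter fun q : Fin n => q ≤ x).card = x.val + 1 := by
  have h2 : (Finset.univ.filter fun r : Fin n => r ≤ x) = Finset.Iic x := by
    ext r; simp
  rw [h2, Fin.card_Iic]

lemma card_lt_eq (x : Fin n) : (Finset.univ.filter fun q : Fin n => q < x).card = x.val := by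
  have h2 : (Finset.univ.filter fun r : Fin n => r < x) = Finset.Iio x := by
    ext r; simp
  rw [h2, Fin.card_Iio]

/-- ascending chain -/
lemma chain_lt (w : Equiv.Perm (Fin n)) :
    ∀ (d p q : ℕ) (hp : p < n) (hq : q < n), p + d = q → 0 < d →
    (∀ i, p ≤ i → i < q → ∀ (h1 : i < n) (h2 : i + 1 < n), w ⟨i, h1⟩ < w ⟨i + 1, h2⟩) →
    w ⟨p, hp⟩ < w ⟨q, hq⟩ := by
  intro d
  induction d with
  | zero => intro p q hp hq h1 h2; omega
  | succ d ihd =>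
    intro p q hp hq hpq hd h
    rcases Nat.eq_zero_or_pos d with rfl | hd'
    · have : q = p + 1 := by omega
      subst this
      exact h p le_rfl (by omega) hp hq
    · have hq' : p + d < n := by omega
      have step : w ⟨p + d, hq'⟩ < w ⟨q, hq⟩ := by
        have : p + d + 1 = q := by omega
        subst this
        exact h (p + d) (by omega) (by omega) hq' hq
      exact lt_trans (ihd p (p + d) hp hq' rfl hd' (fun i a b c e => h i a (by omega) c e)) step

/-- descending chain -/
lemma chain_gt (w : Equiv.Perm (Fin n)) :
    ∀ (d p q : ℕ) (hp : p < n) (hq : q < n), p + d = q → 0 < d →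
    (∀ i, p ≤ i → i < q → ∀ (h1 : i < n) (h2 : i + 1 < n), w ⟨i + 1, h2⟩ < w ⟨i, h1⟩) →
    w ⟨q, hq⟩ < w ⟨p, hp⟩ := by
  intro d
  induction d with
  | zero => intro p q hp hq h1 h2; omega
  | succ d ihd =>
    intro p q hp hq hpq hd h
    rcases Nat.eq_zero_or_pos d with rfl | hd'
    · have : q = p + 1 := by omega
      subst this
      exact h p le_rfl (by omega) hp hq
    · have hq' : p + d < n := by omega
      have step : w ⟨q, hq⟩ < w ⟨p + d, hq'⟩ := by
        have : p + d + 1 = q := by omega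
        subst this
        exact h (p + d) (by omega) (by omega) hq' hq
      exact lt_trans step (ihd p (p + d) hp hq' rfl hd' (fun i a b c e => h i a (by omega) c e))

end BW5

namespace BW6
open BW BW2 BW3 BW4 BW5
variable {n : ℕ}

noncomputable def kS (S : Set ℕ) (p : Fin n) : ℕ := cnt Sᶜ p.val * n + (n - 1 - p.val)
noncomputable def kT (T : Set ℕ) (p : Fin n) : ℕ := (n - cnt T p.val) * n + p.val

lemma cnt_le (D : Set ℕ) (p : ℕ) : cnt D p ≤ p := by
  classical
  calc ((Finset.range p).filter (· ∈ D)).card ≤ (Finset.range p).card :=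
        Finset.card_filter_le _ _
    _ = p := Finset.card_range p

lemma kS_inj (S : Set ℕ) : Function.Injective (kS S : Fin n → ℕ) := by
  intro p q h
  have hp := p.isLt
  have hq := q.isLt
  have h1 := key_inj (show n - 1 - p.val < n by omega) (show n - 1 - q.val < n by omega) h
  exact Fin.ext (by omega)

lemma kT_inj (T : Set ℕ) : Function.Injective (kT T : Fin n → ℕ) := by
  intro p q h
  have h1 := key_inj p.isLt q.isLt h
  exact Fin.ext h1.2

lemma mem_Invs_m0 (S : Set ℕ) {p q : Fin n} :
    (p, q) ∈ Invs (mkPerm (kS S)) ↔ p < q ∧ cnt Sᶜ p.val = cnt Sᶜ q.val := by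
  rw [mem_Invs_pair]
  apply and_congr_right
  intro hpq
  show mkPerm (kS S) q < mkPerm (kS S) p ↔ _
  rw [mkPerm_lt_iff (kS_inj S)]
  unfold kS
  have hp := p.isLt
  have hq := q.isLt
  rw [key_lt_key (show n - 1 - q.val < n by omega) (show n - 1 - p.val < n by omega)]
  have hm : cnt Sᶜ p.val ≤ cnt Sᶜ q.val := cnt_mono _ (le_of_lt (Fin.lt_def.1 hpq))
  have hpq' := Fin.lt_def.1 hpq
  constructor
  · rintro (h | ⟨h, _⟩) <;> omega
  · intro h
    right
    exact ⟨h.symm, by omega⟩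

lemma mem_Invs_mT (T : Set ℕ) {p q : Fin n} :
    (p, q) ∈ Invs (mkPerm (kT T)) ↔ p < q ∧ cnt T p.val < cnt T q.val := by
  rw [mem_Invs_pair]
  apply and_congr_right
  intro hpq
  show mkPerm (kT T) q < mkPerm (kT T) p ↔ _
  rw [mkPerm_lt_iff (kT_inj T)]
  unfold kT
  rw [key_lt_key q.isLt p.isLt]
  have hm : cnt T p.val ≤ cnt T q.val := cnt_mono _ (le_of_lt (Fin.lt_def.1 hpq))
  have hcp : cnt T p.val ≤ p.val := cnt_le T p.val
  have hcq : cnt T q.val ≤ q.val := cnt_le T q.val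
  have hp := p.isLt
  have hq := q.isLt
  have hpq' := Fin.lt_def.1 hpq
  constructor
  · rintro (h | ⟨_, h⟩) <;> omega
  · intro h
    left
    omega

lemma asc_of_not_desc {w : Equiv.Perm (Fin n)} {i : ℕ} (hh : i + 1 < n)
    (h : ¬ w (hi i hh) < w (lo i hh)) : w (lo i hh) < w (hi i hh) :=
  lt_of_le_of_ne (not_lt.1 h)
    (fun hc => absurd (w.injective hc) (ne_of_lt (lo_lt_hi hh)))

lemma DesR_subset_T_iff (T : Set ℕ) (w : Equiv.Perm (Fin n)) :
    DesR w ⊆ T ↔ Invs w ⊆ Invs (mkPerm (kT T)) := by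
  constructor
  · intro hD x hx
    obtain ⟨p, q⟩ := x
    rw [mem_Invs_pair] at hx
    obtain ⟨hpq, hw⟩ := hx
    rw [mem_Invs_mT]
    refine ⟨hpq, ?_⟩
    by_contra hc
    have heq : cnt T p.val = cnt T q.val :=
      le_antisymm (cnt_mono _ (le_of_lt (Fin.lt_def.1 hpq))) (not_lt.1 hc)
    have hasc : w ⟨p.val, p.isLt⟩ < w ⟨q.val, q.isLt⟩ := by
      apply chain_lt w (q.val - p.val) p.val q.val p.isLt q.isLt (by omega)
        (by have := Fin.lt_def.1 hpq; omega)
      intro i h1 h2 hi1 hi2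
      have hiT : i ∉ T := notmem_of_cnt_eq T heq h1 h2
      have : ¬ w (hi i hi2) < w (lo i hi2) := by
        intro hcc
        exact hiT (hD (mem_DesR_iff.2 ⟨hi2, hcc⟩))
      exact asc_of_not_desc hi2 this
    have : w p < w q := hasc
    exact absurd hw (not_lt.2 this.le)
  · intro hsub i hiD
    obtain ⟨hh, hlt⟩ := mem_DesR_iff.1 hiD
    have hmem : (lo i hh, hi i hh) ∈ Invs w := mem_Invs_pair.2 ⟨lo_lt_hi hh, hlt⟩
    have := (mem_Invs_mT T).1 (hsub hmem)
    have hlt2 : cnt T i < cnt T (i + 1) := this.2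
    by_contra hc
    rw [cnt_succ_not T hc] at hlt2
    omega

lemma S_subset_DesR_iff (S : Set ℕ) (hS : ∀ i ∈ S, i + 1 < n) (w : Equiv.Perm (Fin n)) :
    S ⊆ DesR w ↔ Invs (mkPerm (kS S)) ⊆ Invs w := by
  constructor
  · intro hD x hx
    obtain ⟨p, q⟩ := x
    rw [mem_Invs_m0] at hx
    obtain ⟨hpq, heq⟩ := hx
    rw [mem_Invs_pair]
    refine ⟨hpq, ?_⟩
    have hdesc : w ⟨q.val, q.isLt⟩ < w ⟨p.val, p.isLt⟩ := by
      apply chain_gt w (q.val - p.val) p.val q.val p.isLt q.isLt (by omega)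
        (by have := Fin.lt_def.1 hpq; omega)
      intro i h1 h2 hi1 hi2
      have hiS : i ∈ S := by
        have : i ∉ Sᶜ := notmem_of_cnt_eq Sᶜ heq h1 h2
        simpa using this
      obtain ⟨hh', hlt'⟩ := mem_DesR_iff.1 (hD hiS)
      exact hlt'
    exact hdesc
  · intro hsub i hiS
    have hh := hS i hiS
    have hmem : (lo i hh, hi i hh) ∈ Invs (mkPerm (kS S)) := by
      rw [mem_Invs_m0]
      refine ⟨lo_lt_hi hh, ?_⟩
      show cnt Sᶜ i = cnt Sᶜ (i + 1)
      rw [cnt_succ_not Sᶜ (by simpa using hiS)]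
    have := mem_Invs_pair.1 (hsub hmem)
    exact mem_DesR_iff.2 ⟨hh, this.2⟩

/-- block-preserving permutations -/
def Epred (S : Set ℕ) (w : Equiv.Perm (Fin n)) : Prop :=
  ∀ p : Fin n, cnt Sᶜ (w p).val = cnt Sᶜ p.val

lemma E_adj {S : Set ℕ} {i : ℕ} (hiS : i ∈ S) (hh : i + 1 < n) (x : Fin n) :
    cnt Sᶜ ((adj n i hh x)).val = cnt Sᶜ x.val := by
  have hcc : cnt Sᶜ (i + 1) = cnt Sᶜ i := cnt_succ_not _ (by simpa using hiS)
  by_cases h1 : x = lo i hh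
  · rw [h1, adj_lo hh]
    exact hcc
  · by_cases h2 : x = hi i hh
    · rw [h2, adj_hi hh]
      exact hcc.symm
    · rw [adj_eq, Equiv.swap_apply_of_ne_of_ne h1 h2]

lemma parabolic_E {S : Set ℕ} {w : Equiv.Perm (Fin n)} (hw : w ∈ parabolic n S) :
    Epred S w := by
  induction hw using Subgroup.closure_induction with
  | mem x hx =>
      obtain ⟨i, hiS, hh, rfl⟩ := hx
      exact fun p => E_adj hiS hh p
  | one => intro p; rfl
  | mul x y hx hy ihx ihy =>
      intro p
      rw [Equiv.Perm.mul_apply, ihx, ihy]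
  | inv x hx ihx =>
      intro p
      have := ihx (x⁻¹ p)
      rw [Equiv.Perm.inv_def, Equiv.apply_symm_apply] at this
      exact this.symm

lemma E_parabolic {S : Set ℕ} (hS : ∀ i ∈ S, i + 1 < n) :
    ∀ (k : ℕ) (w : Equiv.Perm (Fin n)), invc w = k → Epred S w → w ∈ parabolic n S := by
  intro k
  induction k using Nat.strongRecOn with
  | ind k ih =>
    intro w hk hE
    by_cases h1 : w = 1
    · subst h1; exact one_mem _
    · obtain ⟨v, hh, hd⟩ := exists_descent h1
      set p := w⁻¹ (lo v hh) with hp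
      set q := w⁻¹ (hi v hh) with hq
      have hwp : w p = lo v hh := by rw [hp]; simp
      have hwq : w q = hi v hh := by rw [hq]; simp
      have evp : cnt Sᶜ v = cnt Sᶜ p.val := by
        have := hE p
        rw [hwp] at this
        exact this
      have evq : cnt Sᶜ (v + 1) = cnt Sᶜ q.val := by
        have := hE q
        rw [hwq] at this
        exact this
      have hmono1 : cnt Sᶜ q.val ≤ cnt Sᶜ p.val := cnt_mono _ (le_of_lt (Fin.lt_def.1 hd))
      have hmono2 : cnt Sᶜ v ≤ cnt Sᶜ (v + 1) := cnt_mono _ (by omega)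
      have hvv : cnt Sᶜ (v + 1) = cnt Sᶜ v := by omega
      have hvS : v ∈ S := by
        have := (cnt_succ_eq_iff Sᶜ v).1 hvv
        simpa using this
      have hE' : Epred S (adj n v hh * w) := by
        intro x
        rw [Equiv.Perm.mul_apply, E_adj hvS hh, hE]
      have hdec : invc w = invc (adj n v hh * w) + 1 := invc_adj_mul_desc hh hd
      have hmem := ih (invc (adj n v hh * w)) (by omega) (adj n v hh * w) rfl hE'
      have hrw : w = adj n v hh * (adj n v hh * w) := by
        rw [← mul_assoc, adj_mul_self, one_mul]
      rw [hrw]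
      exact mul_mem (Subgroup.subset_closure ⟨v, hvS, hh, rfl⟩) hmem

lemma E_Invs_subset {S : Set ℕ} {w : Equiv.Perm (Fin n)} (hE : Epred S w) :
    Invs w ⊆ Invs (mkPerm (kS S)) := by
  intro x hx
  obtain ⟨p, q⟩ := x
  rw [mem_Invs_pair] at hx
  obtain ⟨hpq, hw⟩ := hx
  rw [mem_Invs_m0]
  refine ⟨hpq, ?_⟩
  have h1 : cnt Sᶜ p.val ≤ cnt Sᶜ q.val := cnt_mono _ (le_of_lt (Fin.lt_def.1 hpq))
  have h2 : cnt Sᶜ (w q).val ≤ cnt Sᶜ (w p).val := cnt_mono _ (le_of_lt (Fin.lt_def.1 hw))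
  rw [hE p, hE q] at h2
  omega

lemma rank_m0 (S : Set ℕ) (x : Fin n) :
    ((mkPerm (kS S)) x).val = (Finset.univ.filter fun q : Fin n => kS S q < kS S x).card := by
  rw [← rank_eq (mkPerm (kS S)) x]
  congr 1
  ext q
  simp only [Finset.mem_filter, Finset.mem_univ, true_and]
  rw [mkPerm_lt_iff (kS_inj S)]

lemma E_m0 (S : Set ℕ) : Epred (n := n) S (mkPerm (kS S)) := by
  intro x
  set v := (mkPerm (kS S)) x with hv
  set A := (Finset.univ.filter fun q : Fin n => cnt Sᶜ q.val < cnt Sᶜ x.val).card with hA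
  set B := (Finset.univ.filter fun q : Fin n => cnt Sᶜ q.val ≤ cnt Sᶜ x.val).card with hB
  have hp := x.isLt
  have hAv : A ≤ v.val := by
    rw [hv, rank_m0]
    apply Finset.card_le_card
    intro q hq
    simp only [Finset.mem_filter, Finset.mem_univ, true_and] at *
    unfold kS
    rw [key_lt_key (show n - 1 - q.val < n by have := q.isLt; omega)
      (show n - 1 - x.val < n by omega)]
    exact Or.inl hq
  have hsub : (Finset.univ.filter fun q : Fin n => kS S q < kS S x) ⊆
      (Finset.univ.filter fun q : Fin n => cnt Sᶜ q.val ≤ cnt Sᶜ x.val ∧ q ≠ x) := by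
    intro q hq
    simp only [Finset.mem_filter, Finset.mem_univ, true_and] at *
    constructor
    · unfold kS at hq
      rw [key_lt_key (show n - 1 - q.val < n by have := q.isLt; omega)
        (show n - 1 - x.val < n by omega)] at hq
      rcases hq with h | ⟨h, _⟩
      · exact h.le
      · exact h.le
    · intro hc
      rw [hc] at hq
      exact absurd hq (lt_irrefl _)
  have hvB : v.val < B := by
    have h1 : v.val ≤ ((Finset.univ.filter
        fun q : Fin n => cnt Sᶜ q.val ≤ cnt Sᶜ x.val ∧ q ≠ x)).card := by
      rw [hv, rank_m0]
      exact Finset.card_le_card hsub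
    have h2 : ((Finset.univ.filter
        fun q : Fin n => cnt Sᶜ q.val ≤ cnt Sᶜ x.val ∧ q ≠ x)).card < B := by
      rw [hB]
      apply Finset.card_lt_card
      rw [Finset.ssubset_iff_of_subset (by
        intro q hq
        simp only [Finset.mem_filter, Finset.mem_univ, true_and] at *
        exact hq.1)]
      exact ⟨x, by simp, by simp⟩
    omega
  have hlevel : ∀ r : Fin n, A ≤ r.val → r.val < B → cnt Sᶜ r.val = cnt Sᶜ x.val := by
    intro r hr1 hr2
    rcases lt_trichotomy (cnt Sᶜ r.val) (cnt Sᶜ x.val) with h | h | h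
    · exfalso
      have hsub2 : (Finset.univ.filter fun q : Fin n => q ≤ r) ⊆
          (Finset.univ.filter fun q : Fin n => cnt Sᶜ q.val < cnt Sᶜ x.val) := by
        intro q hq
        simp only [Finset.mem_filter, Finset.mem_univ, true_and] at *
        exact lt_of_le_of_lt (cnt_mono _ hq) h
      have hcard := Finset.card_le_card hsub2
      rw [card_le_lt] at hcard
      omega
    · exact h
    · exfalso
      have hsub2 : (Finset.univ.filter fun q : Fin n => cnt Sᶜ q.val ≤ cnt Sᶜ x.val) ⊆
          (Finset.univ.filter fun q : Fin n => q < r) := by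
        intro q hq
        simp only [Finset.mem_filter, Finset.mem_univ, true_and] at *
        by_contra hc
        have : cnt Sᶜ r.val ≤ cnt Sᶜ q.val := cnt_mono _ (not_lt.1 hc)
        omega
      have hcard := Finset.card_le_card hsub2
      rw [card_lt_eq] at hcard
      omega
  exact hlevel v hAv hvB

end BW6

namespace BW7
open BW BW2 BW3 BW4 BW5 BW6
variable {n : ℕ}

lemma w0_eq {S : Set ℕ} (hS : ∀ i ∈ S, i + 1 < n) {w0S : Equiv.Perm (Fin n)}
    (h0 : IsLongestIn (↑(parabolic n S)) w0S) : w0S = mkPerm (kS S) := by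
  obtain ⟨hmem, hmax⟩ := h0
  have h1 : Invs w0S ⊆ Invs (mkPerm (kS S)) := E_Invs_subset (parabolic_E hmem)
  have hm0 : mkPerm (kS S) ∈ parabolic n S :=
    E_parabolic hS (invc (mkPerm (kS S))) _ rfl (E_m0 S)
  have h2 : len (mkPerm (kS S)) ≤ len w0S := hmax _ hm0
  rw [len_eq_invc, len_eq_invc] at h2
  exact Invs_inj (Finset.eq_of_subset_of_card_le h1 h2)

lemma w1_eq {T : Set ℕ} {w1T : Equiv.Perm (Fin n)}
    (h1 : IsLongestIn {z | DesR z ⊆ T} w1T) : w1T = mkPerm (kT T) := by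
  obtain ⟨hmem, hmax⟩ := h1
  have ha : Invs w1T ⊆ Invs (mkPerm (kT T)) := (DesR_subset_T_iff T w1T).1 hmem
  have hmT : DesR (mkPerm (kT T : Fin n → ℕ)) ⊆ T := (DesR_subset_T_iff T (mkPerm (kT T))).2 subset_rfl
  have h2 : len (mkPerm (kT T)) ≤ len w1T := hmax _ hmT
  rw [len_eq_invc, len_eq_invc] at h2
  exact Invs_inj (Finset.eq_of_subset_of_card_le ha h2)

end BW7


/-- Björner–Wachs. For `S ⊆ T ⊆ [n-1]`, the set of permutations `w`
with `S ⊆ Des_R(w) ⊆ T` is exactly the left weak Bruhat interval `[w₀(S), w₁(T)]_L`. -/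
theorem stmt4 (n : ℕ) (S T : Set ℕ) (hST : S ⊆ T) (hT : ∀ i ∈ T, i + 1 < n)
    (w0S w1T : Equiv.Perm (Fin n))
    (h0 : IsLongestIn (↑(parabolic n S)) w0S)
    (h1 : IsLongestIn {z | DesR z ⊆ T} w1T) :
    {w : Equiv.Perm (Fin n) | S ⊆ DesR w ∧ DesR w ⊆ T} = intervalL w0S w1T := by
  have hS : ∀ i ∈ S, i + 1 < n := fun i hi => hT i (hST hi)
  have e0 : w0S = BW5.mkPerm (BW6.kS S) := BW7.w0_eq hS h0
  have e1 : w1T = BW5.mkPerm (BW6.kT T) := BW7.w1_eq h1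
  ext w
  simp only [Set.mem_setOf_eq, intervalL, e0, e1]
  rw [BW4.leL_iff, BW4.leL_iff]
  exact and_congr (BW6.S_subset_DesR_iff S hS w) (BW6.DesR_subset_T_iff T w)
end

section
/- For subsets S ⊆ T ⊆ [n-1], the set {w ∈ S_n : S ⊆ Des_L(w) ⊆ T} equals the right weak Bruhat interval [w₀(S), w₀(Tᶜ)·w₀]_R. -/
namespace Stmt5Aux

open Equiv Finset

variable {n : ℕ}

/-- The inversion set of a permutation: pairs of values `(a,b)` with `a < b` whose
positions are out of order. -/
def invS (σ : Equiv.Perm (Fin n)) : Finset (Fin n × Fin n) :=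
  Finset.univ.filter fun p => p.1 < p.2 ∧ σ⁻¹ p.2 < σ⁻¹ p.1

lemma mem_invS {σ : Equiv.Perm (Fin n)} {p : Fin n × Fin n} :
    p ∈ invS σ ↔ p.1 < p.2 ∧ σ⁻¹ p.2 < σ⁻¹ p.1 := by
  simp [invS]

lemma mem_invS_mk {σ : Equiv.Perm (Fin n)} {a b : Fin n} :
    (a, b) ∈ invS σ ↔ a < b ∧ σ⁻¹ b < σ⁻¹ a := by
  rw [mem_invS]

lemma invS_one : invS (1 : Equiv.Perm (Fin n)) = ∅ := by
  ext p
  simp only [mem_invS, Finset.notMem_empty, iff_false, not_and]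
  intro h h'
  simp only [inv_one, Equiv.Perm.one_apply] at h'
  exact absurd (h.trans h') (lt_irrefl _)

lemma invS_inj {σ τ : Equiv.Perm (Fin n)} (h : invS σ = invS τ) : σ = τ := by
  have key : ∀ a b : Fin n, a < b → (σ⁻¹ b < σ⁻¹ a ↔ τ⁻¹ b < τ⁻¹ a) := by
    intro a b hab
    constructor
    · intro hh
      have : (a, b) ∈ invS σ := mem_invS.2 ⟨hab, hh⟩
      rw [h] at this; exact (mem_invS.1 this).2
    · intro hh
      have : (a, b) ∈ invS τ := mem_invS.2 ⟨hab, hh⟩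
      rw [← h] at this; exact (mem_invS.1 this).2
  have key2 : ∀ a b : Fin n, a ≠ b → (σ⁻¹ a < σ⁻¹ b ↔ τ⁻¹ a < τ⁻¹ b) := by
    intro a b hne
    rcases lt_or_gt_of_ne hne with hab | hba
    · constructor
      · intro hh
        rcases lt_trichotomy (τ⁻¹ a) (τ⁻¹ b) with h1 | h1 | h1
        · exact h1
        · exact absurd (τ⁻¹.injective h1) (fun hx => hne hx)
        · exact absurd ((key a b hab).2 h1) (not_lt.2 (le_of_lt hh))
      · intro hh
        rcases lt_trichotomy (σ⁻¹ a) (σ⁻¹ b) with h1 | h1 | h1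
        · exact h1
        · exact absurd (σ⁻¹.injective h1) (fun hx => hne hx)
        · exact absurd ((key a b hab).1 h1) (not_lt.2 (le_of_lt hh))
    · have := key b a hba
      constructor
      · intro hh; exact this.1 hh
      · intro hh; exact this.2 hh
  -- τ⁻¹ ∘ σ is strictly monotone, hence equals the identity
  have hmono : StrictMono ⇑(τ⁻¹ * σ) := by
    intro x y hxy
    have hne : σ x ≠ σ y := fun hx => (ne_of_lt hxy) (σ.injective hx)
    have : σ⁻¹ (σ x) < σ⁻¹ (σ y) := by
      simpa using hxy
    have := (key2 (σ x) (σ y) hne).1 this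
    simpa using this
  have hid : ⇑(τ⁻¹ * σ) = id := by
    have hr : Set.range ⇑(τ⁻¹ * σ) = Set.range (id : Fin n → Fin n) := by
      simp [Set.range_id, Equiv.range_eq_univ]
    set_option linter.deprecated false in
    exact (hmono.range_inj strictMono_id).1 hr
  have h1 : τ⁻¹ * σ = 1 := Equiv.Perm.ext fun x => congrFun hid x
  exact (inv_mul_eq_one.mp h1).symm

section Adj

variable {i : ℕ} (hin : i + 1 < n)

lemma adj_inv : (adj n i hin)⁻¹ = adj n i hin := Equiv.swap_inv _ _

lemma adj_lt_adj_iff {x y : Fin n} :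
    adj n i hin x < adj n i hin y ↔
      (x < y ∧ ¬(x.val = i ∧ y.val = i + 1)) ∨ (y.val = i ∧ x.val = i + 1) := by
  simp only [adj, Equiv.swap_apply_def, Fin.lt_def, Fin.ext_iff]
  split_ifs <;> simp_all <;> omega

lemma adj_apply_left : adj n i hin ⟨i, Nat.lt_of_succ_lt hin⟩ = ⟨i + 1, hin⟩ :=
  Equiv.swap_apply_left _ _

lemma adj_apply_right : adj n i hin ⟨i + 1, hin⟩ = ⟨i, Nat.lt_of_succ_lt hin⟩ :=
  Equiv.swap_apply_right _ _

lemma adj_adj (x : Fin n) : adj n i hin (adj n i hin x) = x := by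
  simp [adj]

/-- Membership in the inversion set of `σ * adj`. -/
lemma mem_invS_mul_adj {σ : Equiv.Perm (Fin n)} {p : Fin n × Fin n} :
    p ∈ invS (σ * adj n i hin) ↔
      p.1 < p.2 ∧
        ((σ⁻¹ p.2 < σ⁻¹ p.1 ∧ ¬((σ⁻¹ p.2).val = i ∧ (σ⁻¹ p.1).val = i + 1)) ∨
          ((σ⁻¹ p.1).val = i ∧ (σ⁻¹ p.2).val = i + 1)) := by
  rw [mem_invS]
  have : (σ * adj n i hin)⁻¹ = adj n i hin * σ⁻¹ := by
    rw [mul_inv_rev, adj_inv]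
  rw [this]
  simp only [Equiv.Perm.mul_apply]
  rw [adj_lt_adj_iff]

lemma invS_mul_adj_of_lt {σ : Equiv.Perm (Fin n)}
    (hlt : σ ⟨i, Nat.lt_of_succ_lt hin⟩ < σ ⟨i + 1, hin⟩) :
    invS (σ * adj n i hin) =
      insert (σ ⟨i, Nat.lt_of_succ_lt hin⟩, σ ⟨i + 1, hin⟩) (invS σ) := by
  ext p
  rw [mem_invS_mul_adj, Finset.mem_insert, mem_invS]
  constructor
  · rintro ⟨h12, hc | hc⟩
    · exact Or.inr ⟨h12, hc.1⟩
    · left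
      have e1 : σ⁻¹ p.1 = ⟨i, Nat.lt_of_succ_lt hin⟩ := Fin.ext hc.1
      have e2 : σ⁻¹ p.2 = ⟨i + 1, hin⟩ := Fin.ext hc.2
      have : p.1 = σ ⟨i, Nat.lt_of_succ_lt hin⟩ := by
        rw [← e1]; simp
      have h2 : p.2 = σ ⟨i + 1, hin⟩ := by
        rw [← e2]; simp
      rw [Prod.ext_iff]; exact ⟨this, h2⟩
  · rintro (hp | hp)
    · rw [hp]
      refine ⟨hlt, Or.inr ?_⟩
      simp
    · refine ⟨hp.1, Or.inl ⟨hp.2, ?_⟩⟩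
      rintro ⟨h1, h2⟩
      have e1 : σ⁻¹ p.2 = ⟨i, Nat.lt_of_succ_lt hin⟩ := Fin.ext h1
      have e2 : σ⁻¹ p.1 = ⟨i + 1, hin⟩ := Fin.ext h2
      have hp1 : p.1 = σ ⟨i + 1, hin⟩ := by rw [← e2]; simp
      have hp2 : p.2 = σ ⟨i, Nat.lt_of_succ_lt hin⟩ := by rw [← e1]; simp
      rw [hp1, hp2] at hp
      exact absurd (hp.1.trans hlt) (lt_irrefl _)

lemma invS_mul_adj_of_gt {σ : Equiv.Perm (Fin n)}
    (hgt : σ ⟨i + 1, hin⟩ < σ ⟨i, Nat.lt_of_succ_lt hin⟩) :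
    invS (σ * adj n i hin) =
      (invS σ).erase (σ ⟨i + 1, hin⟩, σ ⟨i, Nat.lt_of_succ_lt hin⟩) := by
  ext p
  rw [mem_invS_mul_adj, Finset.mem_erase, mem_invS]
  constructor
  · rintro ⟨h12, hc | hc⟩
    · refine ⟨?_, h12, hc.1⟩
      rintro rfl
      simp only at hc
      exact hc.2 ⟨by simp, by simp⟩
    · exfalso
      have e1 : σ⁻¹ p.1 = ⟨i, Nat.lt_of_succ_lt hin⟩ := Fin.ext hc.1
      have e2 : σ⁻¹ p.2 = ⟨i + 1, hin⟩ := Fin.ext hc.2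
      have hp1 : p.1 = σ ⟨i, Nat.lt_of_succ_lt hin⟩ := by rw [← e1]; simp
      have hp2 : p.2 = σ ⟨i + 1, hin⟩ := by rw [← e2]; simp
      rw [hp1, hp2] at h12
      exact absurd (h12.trans hgt) (lt_irrefl _)
  · rintro ⟨hne, h12, hinv⟩
    refine ⟨h12, Or.inl ⟨hinv, ?_⟩⟩
    rintro ⟨h1, h2⟩
    apply hne
    have e1 : σ⁻¹ p.2 = ⟨i, Nat.lt_of_succ_lt hin⟩ := Fin.ext h1
    have e2 : σ⁻¹ p.1 = ⟨i + 1, hin⟩ := Fin.ext h2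
    have hp1 : p.1 = σ ⟨i + 1, hin⟩ := by rw [← e2]; simp
    have hp2 : p.2 = σ ⟨i, Nat.lt_of_succ_lt hin⟩ := by rw [← e1]; simp
    rw [Prod.ext_iff]; exact ⟨hp1, hp2⟩

end Adj

section LeftMul

variable {i : ℕ} (hin : i + 1 < n)

/-- The special adjacent pair. -/
def apair (hin : i + 1 < n) : Fin n × Fin n := (⟨i, Nat.lt_of_succ_lt hin⟩, ⟨i + 1, hin⟩)

lemma mem_invS_adj_mul {σ : Equiv.Perm (Fin n)} {p : Fin n × Fin n} :
    p ∈ invS (adj n i hin * σ) ↔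
      p.1 < p.2 ∧ σ⁻¹ (adj n i hin p.2) < σ⁻¹ (adj n i hin p.1) := by
  rw [mem_invS]
  have : (adj n i hin * σ)⁻¹ = σ⁻¹ * adj n i hin := by rw [mul_inv_rev, adj_inv]
  rw [this]
  simp only [Equiv.Perm.mul_apply]

lemma apair_mem_invS_adj_mul {σ : Equiv.Perm (Fin n)} :
    apair hin ∈ invS (adj n i hin * σ) ↔ apair hin ∉ invS σ := by
  rw [mem_invS_adj_mul, mem_invS, apair]
  simp only [adj_apply_left, adj_apply_right]
  constructor
  · rintro ⟨-, h⟩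
    rintro ⟨-, h2⟩
    exact absurd (h.trans h2) (lt_irrefl _)
  · intro h
    have hlt : (⟨i, Nat.lt_of_succ_lt hin⟩ : Fin n) < ⟨i + 1, hin⟩ := by
      simp [Fin.lt_def]
    refine ⟨hlt, ?_⟩
    have hne : σ⁻¹ (⟨i, Nat.lt_of_succ_lt hin⟩ : Fin n) ≠ σ⁻¹ ⟨i + 1, hin⟩ := by
      intro hx
      have := σ⁻¹.injective hx
      simp [Fin.ext_iff] at this
    rcases lt_or_gt_of_ne hne with h1 | h1
    · exact h1
    · exact absurd ⟨hlt, h1⟩ h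

lemma card_erase_invS_adj_mul (σ : Equiv.Perm (Fin n)) :
    ((invS (adj n i hin * σ)).erase (apair hin)).card =
      ((invS σ).erase (apair hin)).card := by
  apply Finset.card_bij' (i := fun p _ => (adj n i hin p.1, adj n i hin p.2))
    (j := fun p _ => (adj n i hin p.1, adj n i hin p.2))
  · intro p hp
    rw [Finset.mem_erase, mem_invS_adj_mul] at hp
    obtain ⟨hne, h12, hinv⟩ := hp
    rw [Finset.mem_erase, mem_invS]
    have hnpair : ¬(p.1.val = i ∧ p.2.val = i + 1) := by
      rintro ⟨h1, h2⟩
      exact hne (Prod.ext (Fin.ext h1) (Fin.ext h2))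
    have hlt : adj n i hin p.1 < adj n i hin p.2 :=
      (adj_lt_adj_iff hin).2 (Or.inl ⟨h12, hnpair⟩)
    refine ⟨?_, hlt, hinv⟩
    intro hx
    rw [apair, Prod.mk.injEq] at hx
    have e1 : p.1 = adj n i hin ⟨i, Nat.lt_of_succ_lt hin⟩ := by
      rw [← hx.1, adj_adj]
    have e2 : p.2 = adj n i hin ⟨i + 1, hin⟩ := by
      rw [← hx.2, adj_adj]
    rw [adj_apply_left] at e1
    rw [adj_apply_right] at e2
    rw [e1, e2] at h12
    simp [Fin.lt_def] at h12
  · intro p hp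
    rw [Finset.mem_erase, mem_invS] at hp
    obtain ⟨hne, h12, hinv⟩ := hp
    rw [Finset.mem_erase, mem_invS_adj_mul]
    have hnpair : ¬(p.1.val = i ∧ p.2.val = i + 1) := by
      rintro ⟨h1, h2⟩
      exact hne (Prod.ext (Fin.ext h1) (Fin.ext h2))
    have hlt : adj n i hin p.1 < adj n i hin p.2 :=
      (adj_lt_adj_iff hin).2 (Or.inl ⟨h12, hnpair⟩)
    refine ⟨?_, hlt, by simpa [adj_adj] using hinv⟩
    intro hx
    rw [apair, Prod.mk.injEq] at hx
    have e1 : p.1 = adj n i hin ⟨i, Nat.lt_of_succ_lt hin⟩ := by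
      rw [← hx.1, adj_adj]
    have e2 : p.2 = adj n i hin ⟨i + 1, hin⟩ := by
      rw [← hx.2, adj_adj]
    rw [adj_apply_left] at e1
    rw [adj_apply_right] at e2
    rw [e1, e2] at h12
    simp [Fin.lt_def] at h12
  · intro p _
    simp [adj_adj]
  · intro p _
    simp [adj_adj]

lemma card_invS_adj_mul_of_not_mem {σ : Equiv.Perm (Fin n)} (h : apair hin ∉ invS σ) :
    (invS (adj n i hin * σ)).card = (invS σ).card + 1 := by
  have hmem : apair hin ∈ invS (adj n i hin * σ) := (apair_mem_invS_adj_mul hin).2 h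
  have h1 := Finset.card_erase_add_one hmem
  rw [card_erase_invS_adj_mul, Finset.erase_eq_of_notMem h] at h1
  omega

lemma card_invS_adj_mul_of_mem {σ : Equiv.Perm (Fin n)} (h : apair hin ∈ invS σ) :
    (invS (adj n i hin * σ)).card + 1 = (invS σ).card := by
  have hmem : apair hin ∉ invS (adj n i hin * σ) := by
    rw [apair_mem_invS_adj_mul hin]; simpa using h
  have h1 := Finset.card_erase_add_one h
  rw [← card_erase_invS_adj_mul hin, Finset.erase_eq_of_notMem hmem] at h1
  omega

lemma card_invS_adj_mul_le (σ : Equiv.Perm (Fin n)) :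
    (invS (adj n i hin * σ)).card ≤ (invS σ).card + 1 := by
  by_cases h : apair hin ∈ invS σ
  · have := card_invS_adj_mul_of_mem hin h
    omega
  · exact le_of_eq (card_invS_adj_mul_of_not_mem hin h)

end LeftMul

section Chain

lemma chain_lt_aux {α : Type*} [Preorder α] (f : Fin n → α) :
    ∀ (d a : ℕ) (hb : a + d + 1 < n),
      (∀ k : ℕ, (hk1 : a ≤ k) → (hk2 : k < a + d + 1) → ∀ h2 : k + 1 < n,
        f ⟨k, by omega⟩ < f ⟨k + 1, h2⟩) →
      f ⟨a, by omega⟩ < f ⟨a + d + 1, hb⟩ := by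
  intro d
  induction d with
  | zero =>
    intro a hb hf
    exact hf a le_rfl (by omega) hb
  | succ d ih =>
    intro a hb hf
    exact lt_trans (ih a (by omega) (fun k hk1 hk2 h2 => hf k hk1 (by omega) h2))
      (hf (a + d + 1) (by omega) (by omega) (by omega))

lemma chain_lt {α : Type*} [Preorder α] {f : Fin n → α} {a b : Fin n} (hab : a < b)
    (hf : ∀ k : ℕ, (hk1 : a.val ≤ k) → (hk2 : k + 1 ≤ b.val) → ∀ h2 : k + 1 < n,
      f ⟨k, by omega⟩ < f ⟨k + 1, h2⟩) :
    f a < f b := by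
  obtain ⟨d, hd⟩ : ∃ d, b.val = a.val + d + 1 :=
    ⟨b.val - a.val - 1, by have : a.val < b.val := hab; omega⟩
  have hb : a.val + d + 1 < n := by have := b.isLt; omega
  have key := chain_lt_aux f d a.val hb (fun k hk1 hk2 h2 => hf k hk1 (by omega) h2)
  have e2 : (⟨a.val + d + 1, hb⟩ : Fin n) = b := Fin.ext (by simp [hd])
  rw [e2] at key
  exact key

lemma exists_adjacent_descent {f : Fin n → Fin n} (hinj : Function.Injective f)
    {a b : Fin n} (hab : a < b) (hf : f b < f a) :
    ∃ k : ℕ, a.val ≤ k ∧ k + 1 ≤ b.val ∧ ∃ h2 : k + 1 < n,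
      f ⟨k + 1, h2⟩ < f ⟨k, by omega⟩ := by
  by_contra hcon
  push_neg at hcon
  have hlt : f a < f b := by
    apply chain_lt hab
    intro k hk1 hk2 h2
    have hne : f ⟨k, by omega⟩ ≠ f ⟨k + 1, h2⟩ := by
      intro hx
      have := hinj hx
      simp [Fin.ext_iff] at this
    rcases lt_or_gt_of_ne hne with h | h
    · exact h
    · exact absurd h (by simpa using hcon k hk1 hk2 h2)
  exact absurd (hlt.trans hf) (lt_irrefl _)

end Chain

section Len

lemma exists_descent {σ : Equiv.Perm (Fin n)} (hne : σ ≠ 1) :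
    ∃ (i : ℕ) (h : i + 1 < n), σ ⟨i + 1, h⟩ < σ ⟨i, Nat.lt_of_succ_lt h⟩ := by
  by_contra hcon
  push_neg at hcon
  apply hne
  have hmono : StrictMono ⇑σ := by
    intro a b hab
    apply chain_lt hab
    intro k hk1 hk2 h
    have hne2 : σ ⟨k, Nat.lt_of_succ_lt h⟩ ≠ σ ⟨k + 1, h⟩ := by
      intro hx
      have := σ.injective hx
      simp [Fin.ext_iff] at this
    rcases lt_or_gt_of_ne hne2 with hr | hr
    · exact hr
    · exact absurd hr (by simpa using hcon k h)
  have hid : ⇑σ = id := by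
    have hr : Set.range ⇑σ = Set.range (id : Fin n → Fin n) := by
      simp [Set.range_id, Equiv.range_eq_univ]
    set_option linter.deprecated false in
    exact (hmono.range_inj strictMono_id).1 hr
  exact Equiv.Perm.ext fun x => congrFun hid x

lemma exists_word (σ : Equiv.Perm (Fin n)) :
    ∃ l : List (Equiv.Perm (Fin n)),
      (∀ π ∈ l, IsAdj n π) ∧ l.prod = σ ∧ l.length = (invS σ).card := by
  generalize hk : (invS σ).card = k
  induction k using Nat.strong_induction_on generalizing σ with
  | _ k ih =>
    rcases Nat.eq_zero_or_pos k with rfl | hpos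
    · have hemp : invS σ = ∅ := Finset.card_eq_zero.mp hk
      have : σ = 1 := invS_inj (by rw [hemp, invS_one])
      exact ⟨[], by simp, by simp [this], rfl⟩
    · have hne : σ ≠ 1 := by
        rintro rfl
        rw [invS_one] at hk
        simp at hk
        omega
      obtain ⟨i, h, hdesc⟩ := exists_descent hne
      have hcardeq : invS (σ * adj n i h) = (invS σ).erase (σ ⟨i + 1, h⟩, σ ⟨i, Nat.lt_of_succ_lt h⟩) :=
        invS_mul_adj_of_gt h hdesc
      have hmem : (σ ⟨i + 1, h⟩, σ ⟨i, Nat.lt_of_succ_lt h⟩) ∈ invS σ := by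
        rw [mem_invS]
        refine ⟨hdesc, ?_⟩
        simp [Fin.lt_def]
      have hcard : (invS (σ * adj n i h)).card = k - 1 := by
        rw [hcardeq, Finset.card_erase_of_mem hmem, hk]
      obtain ⟨l, hl1, hl2, hl3⟩ := ih (k - 1) (by omega) _ hcard
      refine ⟨l ++ [adj n i h], ?_, ?_, ?_⟩
      · intro π hπ
        rcases List.mem_append.1 hπ with hx | hx
        · exact hl1 π hx
        · simp at hx
          exact ⟨i, h, hx⟩
      · rw [List.prod_append, List.prod_singleton, hl2]
        rw [mul_assoc]
        have : adj n i h * adj n i h = 1 := by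
          rw [adj]; exact Equiv.swap_mul_self _ _
        rw [this, mul_one]
      · simp [hl3]; omega

lemma card_le_of_word : ∀ l : List (Equiv.Perm (Fin n)), (∀ π ∈ l, IsAdj n π) →
    (invS l.prod).card ≤ l.length := by
  intro l
  induction l with
  | nil => intro _; simp [invS_one]
  | cons π t ih =>
    intro hl
    obtain ⟨i, h, hπ⟩ := hl π (List.mem_cons_self)
    rw [List.prod_cons, hπ, List.length_cons]
    have h1 := card_invS_adj_mul_le h t.prod
    have h2 := ih (fun ρ hρ => hl ρ (List.mem_cons_of_mem _ hρ))
    omega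

lemma len_eq (σ : Equiv.Perm (Fin n)) : len σ = (invS σ).card := by
  obtain ⟨l, hl1, hl2, hl3⟩ := exists_word σ
  apply le_antisymm
  · exact Nat.sInf_le ⟨l, hl1, hl2, hl3⟩
  · have hne : {k | ∃ l : List (Equiv.Perm (Fin n)),
        (∀ π ∈ l, IsAdj n π) ∧ l.prod = σ ∧ l.length = k}.Nonempty :=
      ⟨(invS σ).card, l, hl1, hl2, hl3⟩
    obtain ⟨l', hl'1, hl'2, hl'3⟩ := Nat.sInf_mem hne
    rw [len] at *
    rw [← hl'3, ← hl'2]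
    exact card_le_of_word l' hl'1
end Len

section Des

variable {i : ℕ} {σ : Equiv.Perm (Fin n)}

lemma len_adj_mul_of_not_mem (hin : i + 1 < n) (h : apair hin ∉ invS σ) :
    len (adj n i hin * σ) = len σ + 1 := by
  rw [len_eq, len_eq]
  exact card_invS_adj_mul_of_not_mem hin h

lemma len_adj_mul_of_mem (hin : i + 1 < n) (h : apair hin ∈ invS σ) :
    len (adj n i hin * σ) + 1 = len σ := by
  rw [len_eq, len_eq]
  exact card_invS_adj_mul_of_mem hin h

lemma mem_DesL_iff : i ∈ DesL σ ↔ ∃ hin : i + 1 < n, apair hin ∈ invS σ := by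
  constructor
  · rintro ⟨hin, hlt⟩
    refine ⟨hin, ?_⟩
    by_contra hmem
    rw [len_adj_mul_of_not_mem hin hmem] at hlt
    omega
  · rintro ⟨hin, hmem⟩
    refine ⟨hin, ?_⟩
    have := len_adj_mul_of_mem hin hmem
    omega

lemma len_mul_adj_of_lt (hin : i + 1 < n)
    (hlt : σ ⟨i, Nat.lt_of_succ_lt hin⟩ < σ ⟨i + 1, hin⟩) :
    len (σ * adj n i hin) = len σ + 1 := by
  rw [len_eq, len_eq, invS_mul_adj_of_lt hin hlt]
  apply Finset.card_insert_of_notMem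
  rw [mem_invS]
  rintro ⟨-, hx⟩
  simp only [Equiv.Perm.inv_def, Equiv.symm_apply_apply] at hx
  simp [Fin.lt_def] at hx

lemma len_mul_adj_of_gt (hin : i + 1 < n)
    (hgt : σ ⟨i + 1, hin⟩ < σ ⟨i, Nat.lt_of_succ_lt hin⟩) :
    len (σ * adj n i hin) + 1 = len σ := by
  rw [len_eq, len_eq, invS_mul_adj_of_gt hin hgt]
  apply Finset.card_erase_add_one
  rw [mem_invS]
  refine ⟨hgt, ?_⟩
  simp [Fin.lt_def]

lemma mem_DesR_iff : i ∈ DesR σ ↔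
    ∃ hin : i + 1 < n, σ ⟨i + 1, hin⟩ < σ ⟨i, Nat.lt_of_succ_lt hin⟩ := by
  constructor
  · rintro ⟨hin, hlt⟩
    refine ⟨hin, ?_⟩
    by_contra hx
    have hne : σ ⟨i, Nat.lt_of_succ_lt hin⟩ ≠ σ ⟨i + 1, hin⟩ := by
      intro he
      have := σ.injective he
      simp [Fin.ext_iff] at this
    have : σ ⟨i, Nat.lt_of_succ_lt hin⟩ < σ ⟨i + 1, hin⟩ := by
      rcases lt_or_gt_of_ne hne with h | h
      · exact h
      · exact absurd h hx
    rw [len_mul_adj_of_lt hin this] at hlt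
    omega
  · rintro ⟨hin, hgt⟩
    refine ⟨hin, ?_⟩
    have := len_mul_adj_of_gt hin hgt
    omega

lemma not_mem_DesR (hin : i + 1 < n)
    (h : σ ⟨i, Nat.lt_of_succ_lt hin⟩ < σ ⟨i + 1, hin⟩) : i ∉ DesR σ := by
  rw [mem_DesR_iff]
  rintro ⟨hin2, hx⟩
  exact absurd (h.trans hx) (lt_irrefl _)

end Des

section LeRIff

lemma exists_step {u v : Equiv.Perm (Fin n)} (hsub : invS u ⊆ invS v) :
    ∀ (g : ℕ) (a b : Fin n), (a, b) ∈ invS v → (a, b) ∉ invS u →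
      ((u⁻¹ b).val - (u⁻¹ a).val = g) →
      ∃ (i : ℕ) (hin : i + 1 < n),
        u ⟨i, Nat.lt_of_succ_lt hin⟩ < u ⟨i + 1, hin⟩ ∧
          (u ⟨i, Nat.lt_of_succ_lt hin⟩, u ⟨i + 1, hin⟩) ∈ invS v := by
  intro g
  induction g using Nat.strong_induction_on with
  | _ g ih =>
    intro a b hv hu hg
    rw [mem_invS_mk] at hv
    obtain ⟨hab, hvinv⟩ := hv
    rw [mem_invS_mk] at hu
    have hune : u⁻¹ a ≠ u⁻¹ b := fun hx => (ne_of_lt hab) (u⁻¹.injective hx)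
    have hupos : u⁻¹ a < u⁻¹ b := by
      rcases lt_or_gt_of_ne hune with h | h
      · exact h
      · exact absurd ⟨hab, h⟩ hu
    set pa := (u⁻¹ a).val with hpa
    set pb := (u⁻¹ b).val with hpb
    have hpapb : pa < pb := hupos
    have hpbn : pb < n := (u⁻¹ b).isLt
    by_cases hadj : pb = pa + 1
    · -- adjacent positions
      have hin : pa + 1 < n := by omega
      have e1 : (⟨pa, Nat.lt_of_succ_lt hin⟩ : Fin n) = u⁻¹ a := rfl
      have e2 : (⟨pa + 1, hin⟩ : Fin n) = u⁻¹ b := Fin.ext (show pa + 1 = pb by omega)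
      refine ⟨pa, hin, ?_, ?_⟩
      · rw [e1, e2]; simpa using hab
      · rw [e1, e2]; simpa using mem_invS_mk.2 ⟨hab, hvinv⟩
    · -- there is c strictly between in position
      have hmn : pa + 1 < n := by omega
      set c : Fin n := u ⟨pa + 1, hmn⟩ with hcdef
      have hucpos : (u⁻¹ c).val = pa + 1 := by
        rw [hcdef]; simp
      have hca : c ≠ a := by
        intro hx; rw [hx] at hucpos; omega
      have hcb : c ≠ b := by
        intro hx; rw [hx] at hucpos; omega
      have hnot_ac : (a, c) ∉ invS u := by
        rw [mem_invS_mk]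
        rintro ⟨-, hx⟩
        have : (u⁻¹ c).val < pa := hx
        omega
      have hnot_cb : (c, b) ∉ invS u := by
        rw [mem_invS_mk]
        rintro ⟨-, hx⟩
        have : pb < (u⁻¹ c).val := hx
        omega
      have hgap_ac : (u⁻¹ c).val - (u⁻¹ a).val < g := by omega
      have hgap_cb : (u⁻¹ b).val - (u⁻¹ c).val < g := by omega
      rcases lt_trichotomy c a with hc | hc | hc
      · -- c < a < b : consider (c, b)
        have hmemv : (c, b) ∈ invS v := by
          rw [mem_invS_mk]
          refine ⟨hc.trans hab, ?_⟩
          by_contra hnv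
          push_neg at hnv
          have hcain : (c, a) ∈ invS u := mem_invS_mk.2 ⟨hc, by
            show (u⁻¹ a).val < (u⁻¹ c).val
            omega⟩
          have hcav := (mem_invS_mk.1 (hsub hcain)).2
          exact absurd ((hvinv.trans hcav).trans_le hnv) (lt_irrefl _)
        exact ih _ hgap_cb c b hmemv hnot_cb rfl
      · exact absurd hc hca
      · rcases lt_trichotomy c b with hc2 | hc2 | hc2
        · -- a < c < b : (a,c) or (c,b) in invS v
          rcases lt_or_ge (v⁻¹ c) (v⁻¹ a) with hvc | hvc
          · exact ih _ hgap_ac a c (mem_invS_mk.2 ⟨hc, hvc⟩) hnot_ac rfl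
          · exact ih _ hgap_cb c b (mem_invS_mk.2 ⟨hc2, hvinv.trans_le hvc⟩) hnot_cb rfl
        · exact absurd hc2 hcb
        · -- a < b < c : consider (a, c)
          have hmemv : (a, c) ∈ invS v := by
            rw [mem_invS_mk]
            refine ⟨hab.trans hc2, ?_⟩
            by_contra hnv
            push_neg at hnv
            have hbcin : (b, c) ∈ invS u := mem_invS_mk.2 ⟨hc2, by
              show (u⁻¹ c).val < (u⁻¹ b).val
              omega⟩
            have hbcv := (mem_invS_mk.1 (hsub hbcin)).2
            exact absurd ((hnv.trans_lt hbcv).trans hvinv) (lt_irrefl _)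
          exact ih _ hgap_ac a c hmemv hnot_ac rfl

lemma leR_iff {u v : Equiv.Perm (Fin n)} : leR u v ↔ invS u ⊆ invS v := by
  constructor
  · intro h
    induction h with
    | refl => exact subset_rfl
    | tail hbc hcov ih =>
      rename_i b c
      obtain ⟨i, hin, hdes, rfl⟩ := hcov
      refine ih.trans ?_
      have hlt : b ⟨i, Nat.lt_of_succ_lt hin⟩ < b ⟨i + 1, hin⟩ := by
        have hne : b ⟨i, Nat.lt_of_succ_lt hin⟩ ≠ b ⟨i + 1, hin⟩ := by
          intro he
          have := b.injective he
          simp [Fin.ext_iff] at this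
        rcases lt_or_gt_of_ne hne with h | h
        · exact h
        · exact absurd (mem_DesR_iff.2 ⟨hin, h⟩) hdes
      rw [invS_mul_adj_of_lt hin hlt]
      exact Finset.subset_insert _ _
  · intro hsub
    generalize hm : (invS v \ invS u).card = m
    induction m using Nat.strong_induction_on generalizing u with
    | _ m ihm =>
      rcases Nat.eq_zero_or_pos m with rfl | hpos
      · have hsd : invS v \ invS u = ∅ := Finset.card_eq_zero.mp hm
        have : invS v ⊆ invS u := by
          intro p hp
          by_contra hx
          have : p ∈ invS v \ invS u := Finset.mem_sdiff.2 ⟨hp, hx⟩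
          rw [hsd] at this
          simp at this
        have heq : u = v := invS_inj (le_antisymm hsub this)
        rw [heq]
        exact Relation.ReflTransGen.refl
      · obtain ⟨p, hp⟩ : (invS v \ invS u).Nonempty := by
          rw [← Finset.card_pos, hm]; omega
        rw [Finset.mem_sdiff] at hp
        obtain ⟨i, hin, hlt, hmemv⟩ := exists_step hsub _ p.1 p.2 hp.1 (by simpa using hp.2) rfl
        set u' := u * adj n i hin with hu'
        have hinvu' : invS u' =
            insert (u ⟨i, Nat.lt_of_succ_lt hin⟩, u ⟨i + 1, hin⟩) (invS u) :=
          invS_mul_adj_of_lt hin hlt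
        have hq_ne : (u ⟨i, Nat.lt_of_succ_lt hin⟩, u ⟨i + 1, hin⟩) ∉ invS u := by
          rw [mem_invS]
          rintro ⟨-, hx⟩
          simp only [Equiv.Perm.inv_def, Equiv.symm_apply_apply] at hx
          simp [Fin.lt_def] at hx
        have hsub' : invS u' ⊆ invS v := by
          rw [hinvu']
          intro q hq
          rcases Finset.mem_insert.1 hq with rfl | hq
          · exact hmemv
          · exact hsub hq
        have hcard' : (invS v \ invS u').card < m := by
          have hss : invS v \ invS u' ⊂ invS v \ invS u := by
            rw [hinvu']
            constructor
            · intro q hq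
              rw [Finset.mem_sdiff] at hq ⊢
              exact ⟨hq.1, fun hx => hq.2 (Finset.mem_insert_of_mem hx)⟩
            · intro hcon
              have : (u ⟨i, Nat.lt_of_succ_lt hin⟩, u ⟨i + 1, hin⟩) ∈
                  invS v \ insert (u ⟨i, Nat.lt_of_succ_lt hin⟩, u ⟨i + 1, hin⟩) (invS u) :=
                hcon (Finset.mem_sdiff.2 ⟨hmemv, hq_ne⟩)
              rw [Finset.mem_sdiff] at this
              exact this.2 (Finset.mem_insert_self _ _)
          have := Finset.card_lt_card hss
          omega
        have hcov : covR u u' := ⟨i, hin, not_mem_DesR hin hlt, rfl⟩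
        exact Relation.ReflTransGen.head hcov (ihm _ hcard' hsub' rfl)

end LeRIff

section Parabolic

variable {S : Set ℕ}

/-- `a` and `b` lie in the same block of `S` : every index between them is in `S`. -/
def blk (S : Set ℕ) (a b : Fin n) : Prop :=
  ∀ k : ℕ, min a.val b.val ≤ k → k < max a.val b.val → k ∈ S

lemma blk_refl (a : Fin n) : blk S a a := by
  intro k hk1 hk2
  simp at hk1 hk2
  omega

lemma blk_symm {a b : Fin n} (h : blk S a b) : blk S b a := by
  intro k hk1 hk2
  exact h k (by omega) (by omega)

lemma blk_trans {a b c : Fin n} (h1 : blk S a b) (h2 : blk S b c) : blk S a c := by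
  intro k hk1 hk2
  rcases (by omega : (min a.val b.val ≤ k ∧ k < max a.val b.val) ∨
      (min b.val c.val ≤ k ∧ k < max b.val c.val)) with hx | hx
  · exact h1 k hx.1 hx.2
  · exact h2 k hx.1 hx.2

lemma parabolic_blk {w : Equiv.Perm (Fin n)} (hw : w ∈ parabolic n S) :
    ∀ x : Fin n, blk S x (w x) := by
  refine Subgroup.closure_induction (p := fun g _ => ∀ x : Fin n, blk S x (g x))
    ?_ ?_ ?_ ?_ hw
  · rintro π ⟨i, hiS, hin, rfl⟩ x
    by_cases hx1 : x = ⟨i, Nat.lt_of_succ_lt hin⟩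
    · rw [hx1, adj_apply_left]
      intro k hk1 hk2
      have hk1' : min i (i + 1) ≤ k := hk1
      have hk2' : k < max i (i + 1) := hk2
      have : k = i := by omega
      rw [this]; exact hiS
    · by_cases hx2 : x = ⟨i + 1, hin⟩
      · rw [hx2, adj_apply_right]
        intro k hk1 hk2
        have hk1' : min (i + 1) i ≤ k := hk1
        have hk2' : k < max (i + 1) i := hk2
        have : k = i := by omega
        rw [this]; exact hiS
      · have : adj n i hin x = x := by
          rw [adj]
          apply Equiv.swap_apply_of_ne_of_ne hx1 hx2
        rw [this]
        exact blk_refl x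
  · intro x
    simpa using blk_refl x
  · intro f g _ _ hf hg x
    have h1 : blk S x (g x) := hg x
    have h2 : blk S (g x) (f (g x)) := hf (g x)
    simpa using blk_trans h1 h2
  · intro f _ hf x
    have := hf (f⁻¹ x)
    simp only [Equiv.Perm.inv_def, Equiv.apply_symm_apply] at this
    exact blk_symm this

lemma invS_subset_blk {w : Equiv.Perm (Fin n)} (hw : w ∈ parabolic n S)
    {a b : Fin n} (hab : (a, b) ∈ invS w) : blk S a b := by
  rw [mem_invS_mk] at hab
  obtain ⟨hab1, hab2⟩ := hab
  have hinv : w⁻¹ ∈ parabolic n S := inv_mem hw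
  have h1 : blk S a (w⁻¹ a) := by
    have := parabolic_blk hinv a
    simpa using this
  have h2 : blk S b (w⁻¹ b) := by
    have := parabolic_blk hinv b
    simpa using this
  intro k hk1 hk2
  by_contra hkS
  have hk1' : a.val ≤ k := by omega
  have hk2' : k < b.val := by omega
  -- position of a is ≤ k
  have hpa : (w⁻¹ a).val ≤ k := by
    by_contra hx
    push_neg at hx
    exact hkS (h1 k (by omega) (by omega))
  have hpb : k < (w⁻¹ b).val := by
    by_contra hx
    push_neg at hx
    exact hkS (h2 k (by omega) (by omega))
  have : (w⁻¹ b).val < (w⁻¹ a).val := hab2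
  omega

lemma blk_exists_adj {u : Equiv.Perm (Fin n)} :
    ∀ (g : ℕ) (a b : Fin n), a < b → blk S a b → (a, b) ∉ invS u → b.val - a.val = g →
      ∃ (i : ℕ) (hin : i + 1 < n), i ∈ S ∧ apair hin ∉ invS u := by
  intro g
  induction g using Nat.strong_induction_on with
  | _ g ih =>
    intro a b hab hblk hnot hg
    have hbn : b.val < n := b.isLt
    have habv : a.val < b.val := hab
    by_cases hba : b.val = a.val + 1
    · refine ⟨a.val, by omega, ?_, ?_⟩
      · exact hblk a.val (by omega) (by omega)
      · have e1 : (⟨a.val, by omega⟩ : Fin n) = a := rfl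
        have e2 : (⟨a.val + 1, by omega⟩ : Fin n) = b := Fin.ext (show a.val + 1 = b.val by omega)
        rw [apair, e1, e2]
        exact hnot
    · set c : Fin n := ⟨a.val + 1, by omega⟩ with hcdef
      have hac : a < c := by simp [hcdef, Fin.lt_def]
      have hcb : c < b := by simp [hcdef, Fin.lt_def]; omega
      have hblk_ac : blk S a c := by
        intro k hk1 hk2
        apply hblk k (by simp [hcdef] at hk1 hk2 ⊢; omega) (by simp [hcdef] at hk1 hk2 ⊢; omega)
      have hblk_cb : blk S c b := by
        intro k hk1 hk2
        apply hblk k (by simp [hcdef] at hk1 hk2 ⊢; omega) (by simp [hcdef] at hk1 hk2 ⊢; omega)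
      by_cases hmem1 : (a, c) ∈ invS u
      · by_cases hmem2 : (c, b) ∈ invS u
        · exfalso
          apply hnot
          rw [mem_invS_mk] at hmem1 hmem2 ⊢
          exact ⟨hab, hmem2.2.trans hmem1.2⟩
        · exact ih (b.val - c.val) (by simp [hcdef]; omega) c b hcb hblk_cb hmem2 rfl
      · exact ih (c.val - a.val) (by simp [hcdef]; omega) a c hac hblk_ac hmem1 rfl

/-- Key lemma: the inversion set of a longest element of a suitable set `A`
is exactly the set of in-block pairs. -/
lemma longest_invS {A : Set (Equiv.Perm (Fin n))}
    (hA : ∀ u ∈ A, ∀ a b : Fin n, (a, b) ∈ invS u → blk S a b)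
    (hcl : ∀ u ∈ A, ∀ (i : ℕ) (hin : i + 1 < n), i ∈ S → adj n i hin * u ∈ A)
    {w : Equiv.Perm (Fin n)} (hw : IsLongestIn A w) {a b : Fin n} (hab : a < b) :
    (a, b) ∈ invS w ↔ blk S a b := by
  constructor
  · exact hA w hw.1 a b
  · intro hblk
    by_contra hnot
    obtain ⟨i, hin, hiS, hq⟩ := blk_exists_adj _ a b hab hblk hnot rfl
    have hmem : adj n i hin * w ∈ A := hcl w hw.1 i hin hiS
    have hlen : len (adj n i hin * w) = len w + 1 := len_adj_mul_of_not_mem hin hq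
    have := hw.2 _ hmem
    omega

end Parabolic

section Final

variable {S T : Set ℕ}

lemma blk_adjacent {i : ℕ} (hin : i + 1 < n) (hiS : i ∈ S) :
    blk S (⟨i, Nat.lt_of_succ_lt hin⟩ : Fin n) ⟨i + 1, hin⟩ := by
  intro k hk1 hk2
  have hk1' : min i (i + 1) ≤ k := hk1
  have hk2' : k < max i (i + 1) := hk2
  have : k = i := by omega
  rw [this]; exact hiS

lemma subset_DesL_iff {γ w0S : Equiv.Perm (Fin n)}
    (hS : ∀ i ∈ S, i + 1 < n)
    (char0 : ∀ a b : Fin n, a < b → ((a, b) ∈ invS w0S ↔ blk S a b)) :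
    invS w0S ⊆ invS γ ↔ S ⊆ DesL γ := by
  constructor
  · intro hsub i hiS
    have hin : i + 1 < n := hS i hiS
    refine mem_DesL_iff.2 ⟨hin, hsub ?_⟩
    rw [apair]
    exact (char0 _ _ (by simp [Fin.lt_def])).2 (blk_adjacent hin hiS)
  · intro hdes p hp
    have hp' := mem_invS.1 hp
    obtain ⟨hp1, -⟩ := hp'
    have hblk : blk S p.1 p.2 := (char0 p.1 p.2 hp1).1 hp
    have hv12 : p.1.val < p.2.val := hp1
    rw [mem_invS]
    refine ⟨hp1, ?_⟩
    have : (fun x => OrderDual.toDual (γ⁻¹ x)) p.1 < (fun x => OrderDual.toDual (γ⁻¹ x)) p.2 := by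
      apply chain_lt hp1
      intro k hk1 hk2 h2
      have hkS : k ∈ S := by
        apply hblk k
        · show min p.1.val p.2.val ≤ k
          omega
        · show k < max p.1.val p.2.val
          omega
      obtain ⟨hin', hmem⟩ := mem_DesL_iff.1 (hdes hkS)
      have := (mem_invS_mk.1 (show ((⟨k, Nat.lt_of_succ_lt hin'⟩ : Fin n), (⟨k + 1, hin'⟩ : Fin n)) ∈ invS γ from hmem)).2
      exact this
    exact this

lemma DesL_subset_iff {γ w0Tcw0 : Equiv.Perm (Fin n)}
    (prodchar : ∀ a b : Fin n, a < b →
      ((a, b) ∈ invS w0Tcw0 ↔ ¬ blk {i | i + 1 < n ∧ i ∉ T} a b)) :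
    invS γ ⊆ invS w0Tcw0 ↔ DesL γ ⊆ T := by
  constructor
  · intro hsub i hdes
    obtain ⟨hin, hmem⟩ := mem_DesL_iff.1 hdes
    have hmem2 := hsub hmem
    rw [apair] at hmem2
    have hnblk := (prodchar _ _ (by simp [Fin.lt_def])).1 hmem2
    by_contra hiT
    exact hnblk (blk_adjacent hin ⟨hin, hiT⟩)
  · intro hTdes p hp
    have hp' := mem_invS.1 hp
    obtain ⟨hp1, hp2⟩ := hp'
    have hv12 : p.1.val < p.2.val := hp1
    have hmemiff := prodchar p.1 p.2 hp1
    refine hmemiff.2 ?_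
    intro hblk
    obtain ⟨k, hk1, hk2, h2, hdesc⟩ :=
      exists_adjacent_descent (f := ⇑γ⁻¹) γ⁻¹.injective hp1 hp2
    have hkS' : k ∈ ({i | i + 1 < n ∧ i ∉ T} : Set ℕ) := by
      apply hblk k
      · show min p.1.val p.2.val ≤ k
        omega
      · show k < max p.1.val p.2.val
        omega
    have hkT : k ∈ T := by
      apply hTdes
      refine mem_DesL_iff.2 ⟨h2, ?_⟩
      rw [apair]
      exact mem_invS_mk.2 ⟨by simp [Fin.lt_def], hdesc⟩
    exact hkS'.2 hkT

end Final

end Stmt5Aux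

open Stmt5Aux

/-- For `S ⊆ T ⊆ [n-1]`, the set `{w | S ⊆ Des_L(w) ⊆ T}` equals the
right weak Bruhat interval `[w₀(S), w₀(Tᶜ)·w₀]_R`. -/
theorem stmt5 (n : ℕ) (S T : Set ℕ) (hST : S ⊆ T) (hT : ∀ i ∈ T, i + 1 < n)
    (w0S w0Tc w0 : Equiv.Perm (Fin n))
    (h0 : IsLongestIn (↑(parabolic n S)) w0S)
    (hc : IsLongestIn (↑(parabolic n {i | i + 1 < n ∧ i ∉ T})) w0Tc)
    (hw0 : IsLongestIn Set.univ w0) :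
    {w : Equiv.Perm (Fin n) | S ⊆ DesL w ∧ DesL w ⊆ T} = intervalR w0S (w0Tc * w0) := by
  set S' : Set ℕ := {i | i + 1 < n ∧ i ∉ T} with hS'def
  have hS : ∀ i ∈ S, i + 1 < n := fun i hi => hT i (hST hi)
  -- characterization of the inversion set of w0S
  have char0 : ∀ a b : Fin n, a < b → ((a, b) ∈ invS w0S ↔ blk S a b) := by
    intro a b hab
    refine longest_invS ?_ ?_ h0 hab
    · intro u hu a' b' hmem
      exact invS_subset_blk hu hmem
    · intro u hu i hin hiS
      exact mul_mem (Subgroup.subset_closure ⟨i, hiS, hin, rfl⟩) hu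
  -- characterization of the inversion set of w0Tc
  have charc : ∀ a b : Fin n, a < b → ((a, b) ∈ invS w0Tc ↔ blk S' a b) := by
    intro a b hab
    refine longest_invS ?_ ?_ hc hab
    · intro u hu a' b' hmem
      exact invS_subset_blk hu hmem
    · intro u hu i hin hiS
      exact mul_mem (Subgroup.subset_closure ⟨i, hiS, hin, rfl⟩) hu
  -- w0 reverses everything
  have char1 : ∀ a b : Fin n, a < b → (a, b) ∈ invS w0 := by
    intro a b hab
    have := longest_invS (S := {i | i + 1 < n}) (A := Set.univ)
      (fun u _ a' b' hmem k hk1 hk2 => by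
        have ha' := a'.isLt
        have hb' := b'.isLt
        have hk2' : k < max a'.val b'.val := hk2
        show k + 1 < n
        omega)
      (fun _ _ _ _ _ => Set.mem_univ _) hw0 hab
    refine this.2 ?_
    intro k hk1 hk2
    have ha := a.isLt
    have hb := b.isLt
    have hk2' : k < max a.val b.val := hk2
    show k + 1 < n
    omega
  have w0_anti : ∀ x y : Fin n, x < y → w0⁻¹ y < w0⁻¹ x := by
    intro x y h
    exact (mem_invS_mk.1 (char1 x y h)).2
  have w0_anti_iff : ∀ x y : Fin n, x ≠ y → (w0⁻¹ x < w0⁻¹ y ↔ y < x) := by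
    intro x y hne
    constructor
    · intro h
      rcases lt_or_gt_of_ne hne with hx | hx
      · exact absurd (h.trans (w0_anti x y hx)) (lt_irrefl _)
      · exact hx
    · intro h
      exact w0_anti y x h
  -- the inversion set of w0Tc * w0
  have prodchar : ∀ a b : Fin n, a < b →
      ((a, b) ∈ invS (w0Tc * w0) ↔ ¬ blk S' a b) := by
    intro a b hab
    rw [mem_invS_mk]
    have hinv : (w0Tc * w0)⁻¹ = w0⁻¹ * w0Tc⁻¹ := mul_inv_rev _ _
    rw [hinv]
    simp only [Equiv.Perm.mul_apply]
    have hne : w0Tc⁻¹ b ≠ w0Tc⁻¹ a := fun hx => (ne_of_lt hab).symm (w0Tc⁻¹.injective hx)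
    rw [w0_anti_iff _ _ hne]
    have hne2 : w0Tc⁻¹ a ≠ w0Tc⁻¹ b := hne.symm ∘ Eq.symm ∘ Eq.symm
    constructor
    · rintro ⟨-, hlt⟩
      intro hblk
      have hmem : (a, b) ∈ invS w0Tc := (charc a b hab).2 hblk
      have := (mem_invS_mk.1 hmem).2
      exact absurd (hlt.trans this) (lt_irrefl _)
    · intro hnblk
      refine ⟨hab, ?_⟩
      rcases lt_or_gt_of_ne hne with h | h
      · exfalso
        exact hnblk ((charc a b hab).1 (mem_invS_mk.2 ⟨hab, h⟩))
      · exact h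
  ext γ
  simp only [Set.mem_setOf_eq, intervalR]
  rw [leR_iff, leR_iff]
  rw [subset_DesL_iff hS char0, DesL_subset_iff (prodchar)]
end

section
/- Let P be a regular poset on [n] and let i ∈ [n-1]. If i and i+1 are comparable in P but (i,i+1) is not a covering pair, then the poset s_i · P (obtained by swapping the labels i and i+1) is also regular. -/
/-- A poset with ground set `Fin n` (`[n]`, 0-indexed). -/
structure FinPoset (n : ℕ) where
  le : Fin n → Fin n → Prop
  refl : ∀ a, le a a
  trans : ∀ a b c, le a b → le b c → le a c
  antisymm : ∀ a b, le a b → le b a → a = b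

/-- `Σ_L(P)`: the permutations `σ` with `σ(i) ≤ σ(j)` whenever `i ≼_P j`. -/
def SigmaL {n : ℕ} (P : FinPoset n) : Set (Equiv.Perm (Fin n)) :=
  {σ | ∀ i j : Fin n, P.le i j → σ i ≤ σ j}

/-- `P` is regular: whenever `x ≼_P z` and `y` lies strictly between `x` and `z` in the
integer order, `x ≼_P y` or `y ≼_P z`. -/
def Regular {n : ℕ} (P : FinPoset n) : Prop :=
  ∀ x y z : Fin n, P.le x z → ((x < y ∧ y < z) ∨ (z < y ∧ y < x)) →
    P.le x y ∨ P.le y z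

/-- The poset `σ · P`, obtained by relabelling: `i ≼ j` iff `σ⁻¹(i) ≼_P σ⁻¹(j)`. -/
def permPoset {n : ℕ} (σ : Equiv.Perm (Fin n)) (P : FinPoset n) : FinPoset n where
  le i j := P.le (σ⁻¹ i) (σ⁻¹ j)
  refl _ := P.refl _
  trans _ _ _ h1 h2 := P.trans _ _ _ h1 h2
  antisymm _ _ h1 h2 := σ⁻¹.injective (P.antisymm _ _ h1 h2)

/-- `b` covers `a` in `P`. -/
def Covers {n : ℕ} (P : FinPoset n) (a b : Fin n) : Prop :=
  a ≠ b ∧ P.le a b ∧ ¬ ∃ c, c ≠ a ∧ c ≠ b ∧ P.le a c ∧ P.le c b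

/-- `a` and `b` are comparable in `P`. -/
def Cmp {n : ℕ} (P : FinPoset n) (a b : Fin n) : Prop :=
  P.le a b ∨ P.le b a

/-!
Let `s` swap `i` and `i + 1` and take `x ≼ z` in `s · P` with `y` strictly between `x` and `z`.
If `{x, y}` or `{y, z}` is `{i, i + 1}`, the comparability of `i` and `i + 1` in `P` gives the
required relation by one transitivity step. Otherwise `s` keeps `s y` strictly between `s x`
and `s z`, since `i` and `i + 1` are adjacent, and regularity of `P` applies to `s x, s y, s z`.
-/

open Equiv

section SwapCovBy

variable {α : Type*} [LinearOrder α] [DecidableEq α] {a b u v x y z : α}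

/-- Since nothing lies strictly between `a` and `b`, the swap changes no strict inequality
other than `a < b` itself. -/
lemma swap_lt_swap_of_covBy (hab : a ⋖ b) (huv : u < v) (hne : s(u, v) ≠ s(a, b)) :
    swap a b u < swap a b v := by
  rcases eq_or_ne u a with rfl | hua
  · have hvb : v ≠ b := by rintro rfl; exact hne rfl
    rw [swap_apply_left, swap_apply_of_ne_of_ne huv.ne' hvb]
    exact (hab.ge_of_gt huv).lt_of_ne hvb.symm
  rcases eq_or_ne u b with rfl | hub
  · rw [swap_apply_right, swap_apply_of_ne_of_ne (hab.lt.trans huv).ne' huv.ne']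
    exact hab.lt.trans huv
  rw [swap_apply_of_ne_of_ne hua hub]
  rcases eq_or_ne v a with rfl | hva
  · rw [swap_apply_left]
    exact huv.trans hab.lt
  rcases eq_or_ne v b with rfl | hvb
  · rw [swap_apply_right]
    exact (hab.le_of_lt huv).lt_of_ne hua
  rwa [swap_apply_of_ne_of_ne hva hvb]

lemma swap_between_of_covBy (hab : a ⋖ b) (hbet : x < y ∧ y < z ∨ z < y ∧ y < x)
    (hxy : s(x, y) ≠ s(a, b)) (hyz : s(y, z) ≠ s(a, b)) :
    swap a b x < swap a b y ∧ swap a b y < swap a b z ∨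
      swap a b z < swap a b y ∧ swap a b y < swap a b x := by
  rcases hbet with ⟨hlt₁, hlt₂⟩ | ⟨hlt₁, hlt₂⟩
  · exact Or.inl ⟨swap_lt_swap_of_covBy hab hlt₁ hxy, swap_lt_swap_of_covBy hab hlt₂ hyz⟩
  · rw [Sym2.eq_swap] at hxy hyz
    exact Or.inr ⟨swap_lt_swap_of_covBy hab hlt₁ hyz, swap_lt_swap_of_covBy hab hlt₂ hxy⟩

end SwapCovBy

namespace Cmp

variable {n : ℕ} {P : FinPoset n} {a b u v w : Fin n}

lemma symm (h : Cmp P u v) : Cmp P v u :=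
  Or.symm h

lemma le_or_le_of_le_left (h : Cmp P u v) (huw : P.le u w) : P.le u v ∨ P.le v w :=
  h.imp_right fun hvu => P.trans _ _ _ hvu huw

lemma le_or_le_of_le_right (h : Cmp P v w) (huw : P.le u w) : P.le u v ∨ P.le v w :=
  h.symm.imp_left fun hwv => P.trans _ _ _ huw hwv

lemma swap_apply_of_sym2_eq (h : Cmp P a b) (huv : s(u, v) = s(a, b)) :
    Cmp P (swap a b u) (swap a b v) := by
  rcases Sym2.eq_iff.1 huv with ⟨rfl, rfl⟩ | ⟨rfl, rfl⟩
  · rw [swap_apply_left, swap_apply_right]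
    exact h.symm
  · rwa [swap_apply_left, swap_apply_right]

end Cmp

theorem Regular.permPoset_swap_of_covBy {n : ℕ} {P : FinPoset n} (hP : Regular P)
    {a b : Fin n} (hab : a ⋖ b) (hcmp : Cmp P a b) : Regular (permPoset (swap a b) P) := by
  intro x y z hxz hbet
  simp only [permPoset, swap_inv] at hxz ⊢
  by_cases hxy : s(x, y) = s(a, b)
  · exact (hcmp.swap_apply_of_sym2_eq hxy).le_or_le_of_le_left hxz
  by_cases hyz : s(y, z) = s(a, b)
  · exact (hcmp.swap_apply_of_sym2_eq hyz).le_or_le_of_le_right hxz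
  exact hP _ _ _ hxz (swap_between_of_covBy hab hbet hxy hyz)

theorem stmt7_general (n : ℕ) (P : FinPoset n) (hP : Regular P) (i : ℕ) (h : i + 1 < n)
    (hcmp : Cmp P ⟨i, Nat.lt_of_succ_lt h⟩ ⟨i + 1, h⟩) :
    Regular (permPoset (adj n i h) P) :=
  hP.permPoset_swap_of_covBy (Fin.covBy_iff.2 (Order.covBy_add_one i)) hcmp

/-- If `i` and `i+1` are comparable in a regular poset `P` on `[n]` but
`(i, i+1)` is not a covering pair, then the relabelled poset `s_i · P` is also regular. -/
theorem stmt7 (n : ℕ) (P : FinPoset n) (hP : Regular P) (i : ℕ) (h : i + 1 < n)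
    (hcmp : Cmp P ⟨i, Nat.lt_of_succ_lt h⟩ ⟨i + 1, h⟩)
    (hnc₁ : ¬ Covers P ⟨i, Nat.lt_of_succ_lt h⟩ ⟨i + 1, h⟩)
    (hnc₂ : ¬ Covers P ⟨i + 1, h⟩ ⟨i, Nat.lt_of_succ_lt h⟩) :
    Regular (permPoset (adj n i h) P) :=
  stmt7_general n P hP i h hcmp
end

section
/- Let P be a poset on [n] such that Σ_L(P) is a left weak Bruhat interval [δ, η]_L. Then for each k ∈ [n], δ(k) equals the number of elements x ∈ [n] that are either ≼_P k, or incomparable to k in P and satisfy x < k; and η(k) equals the number of x ∈ [n] that are either ≼_P k, or incomparable to k and satisfy x > k. -/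
def fia {n i : ℕ} (h : i + 1 < n) : Fin n := ⟨i, Nat.lt_of_succ_lt h⟩
def fib {n i : ℕ} (h : i + 1 < n) : Fin n := ⟨i + 1, h⟩

lemma fia_lt_fib {n i : ℕ} (h : i + 1 < n) : fia h < fib h := by
  simp [fia, fib, Fin.lt_def]

lemma adj_fia {n i : ℕ} (h : i + 1 < n) : adj n i h (fia h) = fib h :=
  Equiv.swap_apply_left _ _

lemma adj_fib {n i : ℕ} (h : i + 1 < n) : adj n i h (fib h) = fia h :=
  Equiv.swap_apply_right _ _

lemma adj_val {n i : ℕ} (h : i + 1 < n) (w : Fin n) :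
    ((adj n i h w : Fin n) : ℕ) =
      if (w : ℕ) = i then i + 1 else if (w : ℕ) = i + 1 then i else w := by
  unfold adj
  rcases eq_or_ne w ⟨i, Nat.lt_of_succ_lt h⟩ with rfl | hw1
  · simp [Equiv.swap_apply_left]
  · rcases eq_or_ne w ⟨i + 1, h⟩ with rfl | hw2
    · simp [Equiv.swap_apply_right]
    · rw [Equiv.swap_apply_of_ne_of_ne hw1 hw2]
      have h1 : (w : ℕ) ≠ i := fun hh => hw1 (Fin.ext hh)
      have h2 : (w : ℕ) ≠ i + 1 := fun hh => hw2 (Fin.ext hh)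
      simp [h1, h2]

lemma adj_lt_iff {n i : ℕ} (h : i + 1 < n) {u v : Fin n} (huv : u < v) :
    adj n i h u < adj n i h v ↔ ¬(u = fia h ∧ v = fib h) := by
  rw [Fin.lt_def, adj_val, adj_val]
  rw [Fin.lt_def] at huv
  simp only [fia, fib, Fin.ext_iff]
  split_ifs <;> omega

def invSet {n : ℕ} (σ : Equiv.Perm (Fin n)) : Finset (Fin n × Fin n) :=
  Finset.univ.filter fun p => p.1 < p.2 ∧ σ p.2 < σ p.1

lemma mem_invSet {n : ℕ} {σ : Equiv.Perm (Fin n)} {p : Fin n × Fin n} :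
    p ∈ invSet σ ↔ p.1 < p.2 ∧ σ p.2 < σ p.1 := by
  simp [invSet]

lemma mem_invSet_mul {n i : ℕ} (h : i + 1 < n) (σ : Equiv.Perm (Fin n)) (x y : Fin n) :
    (x, y) ∈ invSet (adj n i h * σ) ↔
      x < y ∧ ((σ x = fia h ∧ σ y = fib h) ∨
        (σ y < σ x ∧ ¬(σ y = fia h ∧ σ x = fib h))) := by
  rw [mem_invSet]
  simp only [Equiv.Perm.mul_apply]
  refine and_congr_right fun hxy => ?_
  rcases lt_trichotomy (σ x) (σ y) with hlt | heq | hgt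
  · have h2 := adj_lt_iff h hlt
    constructor
    · intro hyx
      refine Or.inl ?_
      by_contra hc
      exact absurd (h2.mpr hc) (asymm hyx)
    · rintro (⟨e1, e2⟩ | ⟨hlt', _⟩)
      · rw [e1, e2, adj_fia, adj_fib]; exact fia_lt_fib h
      · exact absurd hlt (asymm hlt')
  · exact absurd (σ.injective heq) (ne_of_lt hxy)
  · have h2 := adj_lt_iff h hgt
    constructor
    · intro hyx
      exact Or.inr ⟨hgt, h2.mp hyx⟩
    · rintro (⟨e1, e2⟩ | ⟨_, hne'⟩)
      · rw [e1, e2] at hgt; exact absurd (fia_lt_fib h) (asymm hgt)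
      · exact h2.mpr hne'

lemma sigma_eq_iff {n : ℕ} (σ : Equiv.Perm (Fin n)) (x y : Fin n) :
    σ x = y ↔ x = σ⁻¹ y := by
  constructor
  · rintro rfl; simp
  · rintro rfl; simp

lemma invSet_mul_pos {n i : ℕ} (h : i + 1 < n) (σ : Equiv.Perm (Fin n))
    (hpq : σ⁻¹ (fia h) < σ⁻¹ (fib h)) :
    invSet (adj n i h * σ) = insert (σ⁻¹ (fia h), σ⁻¹ (fib h)) (invSet σ) := by
  ext ⟨x, y⟩
  rw [mem_invSet_mul, Finset.mem_insert, mem_invSet, Prod.mk.injEq,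
    sigma_eq_iff σ x (fia h), sigma_eq_iff σ y (fib h),
    sigma_eq_iff σ y (fia h), sigma_eq_iff σ x (fib h)]
  constructor
  · rintro ⟨hxy, (⟨e1, e2⟩ | ⟨hgt, _⟩)⟩
    · exact Or.inl ⟨e1, e2⟩
    · exact Or.inr ⟨hxy, hgt⟩
  · rintro (⟨rfl, rfl⟩ | ⟨hxy, hgt⟩)
    · exact ⟨hpq, Or.inl ⟨rfl, rfl⟩⟩
    · refine ⟨hxy, Or.inr ⟨hgt, ?_⟩⟩
      rintro ⟨rfl, rfl⟩
      exact absurd hxy (asymm hpq)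

lemma pair_not_mem {n i : ℕ} (h : i + 1 < n) (σ : Equiv.Perm (Fin n)) :
    (σ⁻¹ (fia h), σ⁻¹ (fib h)) ∉ invSet σ := by
  rw [mem_invSet]
  simp only [Equiv.Perm.inv_def, Equiv.apply_symm_apply]
  exact fun hc => absurd (fia_lt_fib h) (asymm hc.2)

lemma invSet_mul_neg {n i : ℕ} (h : i + 1 < n) (σ : Equiv.Perm (Fin n))
    (hqp : σ⁻¹ (fib h) < σ⁻¹ (fia h)) :
    invSet (adj n i h * σ) = (invSet σ).erase (σ⁻¹ (fib h), σ⁻¹ (fia h)) := by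
  ext ⟨x, y⟩
  rw [mem_invSet_mul, Finset.mem_erase, mem_invSet]
  constructor
  · rintro ⟨hxy, (⟨e1, e2⟩ | ⟨hgt, hne⟩)⟩
    · rw [sigma_eq_iff] at e1 e2
      rw [e1, e2] at hxy
      exact absurd hxy (asymm hqp)
    · refine ⟨?_, hxy, hgt⟩
      intro hc
      rw [Prod.mk.injEq] at hc
      exact hne ⟨by rw [hc.2]; simp, by rw [hc.1]; simp⟩
  · rintro ⟨hne, hxy, hgt⟩
    refine ⟨hxy, Or.inr ⟨hgt, ?_⟩⟩
    rintro ⟨e1, e2⟩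
    rw [sigma_eq_iff] at e1 e2
    exact hne (by rw [Prod.mk.injEq]; exact ⟨e2, e1⟩)

lemma pair_mem {n i : ℕ} (h : i + 1 < n) (σ : Equiv.Perm (Fin n))
    (hqp : σ⁻¹ (fib h) < σ⁻¹ (fia h)) :
    (σ⁻¹ (fib h), σ⁻¹ (fia h)) ∈ invSet σ := by
  rw [mem_invSet]
  simp only [Equiv.Perm.inv_def, Equiv.apply_symm_apply]
  exact ⟨hqp, fia_lt_fib h⟩

noncomputable def invc {n : ℕ} (σ : Equiv.Perm (Fin n)) : ℕ := (invSet σ).card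

lemma inv_ne {n i : ℕ} (h : i + 1 < n) (σ : Equiv.Perm (Fin n)) :
    σ⁻¹ (fia h) ≠ σ⁻¹ (fib h) := by
  intro hc
  exact absurd (σ⁻¹.injective hc) (ne_of_lt (fia_lt_fib h))

lemma invc_mul_pos {n i : ℕ} (h : i + 1 < n) (σ : Equiv.Perm (Fin n))
    (hpq : σ⁻¹ (fia h) < σ⁻¹ (fib h)) :
    invc (adj n i h * σ) = invc σ + 1 := by
  rw [invc, invc, invSet_mul_pos h σ hpq,
    Finset.card_insert_of_notMem (pair_not_mem h σ)]

lemma invc_mul_neg {n i : ℕ} (h : i + 1 < n) (σ : Equiv.Perm (Fin n))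
    (hqp : σ⁻¹ (fib h) < σ⁻¹ (fia h)) :
    invc σ = invc (adj n i h * σ) + 1 := by
  rw [invc, invc, invSet_mul_neg h σ hqp,
    Finset.card_erase_of_mem (pair_mem h σ hqp)]
  have := Finset.card_pos.mpr ⟨_, pair_mem h σ hqp⟩
  omega

lemma invc_one {n : ℕ} : invc (1 : Equiv.Perm (Fin n)) = 0 := by
  rw [invc, Finset.card_eq_zero]
  ext ⟨x, y⟩
  simp only [mem_invSet, Finset.notMem_empty, iff_false, not_and]
  intro hxy
  simp only [Equiv.Perm.one_apply]
  exact asymm hxy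

lemma strictMono_of_adj {n : ℕ} {f : Fin n → Fin n}
    (hf : ∀ i (h : i + 1 < n), f ⟨i, Nat.lt_of_succ_lt h⟩ < f ⟨i + 1, h⟩) :
    StrictMono f := by
  have key : ∀ m : ℕ, ∀ v : Fin n, (v : ℕ) = m → ∀ u : Fin n, u < v → f u < f v := by
    intro m
    induction m with
    | zero => intro v hv u hu; rw [Fin.lt_def, hv] at hu; omega
    | succ m ih =>
      intro v hv u hu
      have hm : m + 1 < n := hv ▸ v.isLt
      have hveq : v = ⟨m + 1, hm⟩ := Fin.ext hv
      have hw : f ⟨m, Nat.lt_of_succ_lt hm⟩ < f v := hveq ▸ hf m hm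
      rcases eq_or_lt_of_le (show (u : ℕ) ≤ m by rw [Fin.lt_def, hv] at hu; omega) with he | hl
      · have : u = ⟨m, Nat.lt_of_succ_lt hm⟩ := Fin.ext he
        rw [this]; exact hw
      · exact lt_trans (ih ⟨m, Nat.lt_of_succ_lt hm⟩ rfl u (by rwa [Fin.lt_def])) hw
  intro u v huv
  exact key (v : ℕ) v rfl u huv

lemma perm_strictMono_eq_one {n : ℕ} {σ : Equiv.Perm (Fin n)}
    (hσ : StrictMono (σ : Fin n → Fin n)) : σ = 1 := by
  have hinv : StrictMono (σ⁻¹ : Equiv.Perm (Fin n)) := by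
    intro u v huv
    rcases lt_trichotomy (σ⁻¹ u) (σ⁻¹ v) with h | h | h
    · exact h
    · exact absurd (σ⁻¹.injective h) (ne_of_lt huv)
    · have := hσ h
      simp only [Equiv.Perm.inv_def, Equiv.apply_symm_apply] at this
      exact absurd huv (asymm this)
  have le_apply : ∀ (f : Equiv.Perm (Fin n)), StrictMono (f : Fin n → Fin n) →
      ∀ x : Fin n, (x : ℕ) ≤ (f x : ℕ) := by
    intro f hf x
    have key : ∀ m : ℕ, ∀ x : Fin n, (x : ℕ) = m → m ≤ (f x : ℕ) := by
      intro m
      induction m with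
      | zero => omega
      | succ m ih =>
        intro x hx
        have hm : m < n := by omega
        have : f ⟨m, hm⟩ < f x := hf (by simp only [Fin.lt_def, Fin.val_mk, hx]; omega)
        have h2 := ih ⟨m, hm⟩ rfl
        rw [Fin.lt_def] at this
        omega
    exact key (x : ℕ) x rfl
  ext x
  have h1 := le_apply σ hσ x
  have h2 := le_apply σ⁻¹ hinv (σ x)
  simp only [Equiv.Perm.inv_def, Equiv.symm_apply_apply] at h2
  simp only [Equiv.Perm.one_apply]
  omega

lemma invc_zero_eq_one {n : ℕ} {σ : Equiv.Perm (Fin n)} (h : invc σ = 0) : σ = 1 := by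
  apply perm_strictMono_eq_one
  intro u v huv
  rcases lt_trichotomy (σ u) (σ v) with h' | h' | h'
  · exact h'
  · exact absurd (σ.injective h') (ne_of_lt huv)
  · exfalso
    have : (u, v) ∈ invSet σ := mem_invSet.mpr ⟨huv, h'⟩
    rw [invc, Finset.card_eq_zero] at h
    rw [h] at this
    exact absurd this (Finset.notMem_empty _)

lemma exists_descent {n : ℕ} {σ : Equiv.Perm (Fin n)} (h : σ ≠ 1) :
    ∃ i, ∃ h : i + 1 < n, σ⁻¹ (fib h) < σ⁻¹ (fia h) := by
  by_contra hc
  push_neg at hc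
  apply h
  have : StrictMono (σ⁻¹ : Equiv.Perm (Fin n)) := by
    apply strictMono_of_adj
    intro i hi
    rcases lt_trichotomy (σ⁻¹ (fia hi)) (σ⁻¹ (fib hi)) with h' | h' | h'
    · exact h'
    · exact absurd (σ⁻¹.injective h') (ne_of_lt (fia_lt_fib hi))
    · exact absurd h' (not_lt_of_ge (hc i hi))
  have := perm_strictMono_eq_one this
  rw [← inv_inv σ, this, inv_one]

lemma exists_word {n : ℕ} (σ : Equiv.Perm (Fin n)) :
    ∃ l : List (Equiv.Perm (Fin n)),
      (∀ π ∈ l, IsAdj n π) ∧ l.prod = σ ∧ l.length = invc σ := by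
  generalize hm : invc σ = m
  induction m generalizing σ with
  | zero =>
    refine ⟨[], by simp, ?_, rfl⟩
    simp [invc_zero_eq_one hm]
  | succ m ih =>
    have hne : σ ≠ 1 := by
      intro hc; rw [hc, invc_one] at hm; omega
    obtain ⟨i, hi, hdes⟩ := exists_descent hne
    have hstep := invc_mul_neg hi σ hdes
    rw [hm] at hstep
    obtain ⟨l, hl1, hl2, hl3⟩ := ih (adj n i hi * σ) (by omega)
    refine ⟨adj n i hi :: l, ?_, ?_, by rw [List.length_cons, hl3]⟩
    · intro π hπ
      rcases List.mem_cons.mp hπ with rfl | hm'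
      · exact ⟨i, hi, rfl⟩
      · exact hl1 π hm'
    · rw [List.prod_cons, hl2, ← mul_assoc]
      have : adj n i hi * adj n i hi = 1 := Equiv.swap_mul_self _ _
      rw [this, one_mul]

lemma invc_prod_le {n : ℕ} (l : List (Equiv.Perm (Fin n))) (hl : ∀ π ∈ l, IsAdj n π) :
    invc l.prod ≤ l.length := by
  induction l with
  | nil => simp [invc_one]
  | cons π t ih =>
    obtain ⟨i, hi, rfl⟩ := hl π (List.mem_cons_self)
    have ht := ih (fun π hπ => hl π (List.mem_cons_of_mem _ hπ))
    rw [List.prod_cons, List.length_cons]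
    rcases lt_trichotomy ((t.prod)⁻¹ (fia hi)) ((t.prod)⁻¹ (fib hi)) with h' | h' | h'
    · rw [invc_mul_pos hi t.prod h']; omega
    · exact absurd ((t.prod)⁻¹.injective h') (ne_of_lt (fia_lt_fib hi))
    · have := invc_mul_neg hi t.prod h'; omega

lemma len_eq_invc {n : ℕ} (σ : Equiv.Perm (Fin n)) : len σ = invc σ := by
  obtain ⟨l, hl1, hl2, hl3⟩ := exists_word σ
  rw [len]
  apply le_antisymm
  · exact Nat.sInf_le ⟨l, hl1, hl2, hl3⟩
  · refine le_csInf ⟨invc σ, l, hl1, hl2, hl3⟩ ?_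
    rintro k ⟨l', hl'1, hl'2, hl'3⟩
    rw [← hl'3, ← hl'2]
    exact invc_prod_le l' hl'1


lemma covL_subset {n : ℕ} {σ ρ : Equiv.Perm (Fin n)} (h : covL σ ρ) :
    invSet σ ⊆ invSet ρ := by
  obtain ⟨i, hi, hdes, rfl⟩ := h
  rcases lt_trichotomy (σ⁻¹ (fia hi)) (σ⁻¹ (fib hi)) with h' | h' | h'
  · rw [invSet_mul_pos hi σ h']
    exact Finset.subset_insert _ _
  · exact absurd (σ⁻¹.injective h') (ne_of_lt (fia_lt_fib hi))
  · exfalso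
    apply hdes
    refine ⟨hi, ?_⟩
    rw [len_eq_invc, len_eq_invc]
    have := invc_mul_neg hi σ h'
    omega

lemma leL_subset {n : ℕ} {σ ρ : Equiv.Perm (Fin n)} (h : leL σ ρ) :
    invSet σ ⊆ invSet ρ := by
  induction h with
  | refl => exact Finset.Subset.refl _
  | tail _ hc ih => exact ih.trans (covL_subset hc)

lemma exists_ext {n : ℕ} (P : FinPoset n) (a b : Fin n) (hab : ¬ P.le b a) :
    ∃ σ : Equiv.Perm (Fin n), σ ∈ SigmaL P ∧ σ a ≤ σ b := by
  classical
  set r : Fin n → Fin n → Prop := fun x y => P.le x y ∨ (P.le x a ∧ P.le b y) with hr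
  haveI : IsRefl (Fin n) r := ⟨fun x => Or.inl (P.refl x)⟩
  haveI : IsTrans (Fin n) r := ⟨by
    rintro x y z (hxy | ⟨hxa, hby⟩) (hyz | ⟨hya, hbz⟩)
    · exact Or.inl (P.trans _ _ _ hxy hyz)
    · exact Or.inr ⟨P.trans _ _ _ hxy hya, hbz⟩
    · exact Or.inr ⟨hxa, P.trans _ _ _ hby hyz⟩
    · exact Or.inr ⟨hxa, hbz⟩⟩
  haveI : IsAntisymm (Fin n) r := ⟨by
    rintro x y (hxy | ⟨hxa, hby⟩) (hyx | ⟨hya, hbx⟩)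
    · exact P.antisymm _ _ hxy hyx
    · exact absurd (P.trans _ _ _ hbx (P.trans _ _ _ hxy hya)) hab
    · exact absurd (P.trans _ _ _ hby (P.trans _ _ _ hyx hxa)) hab
    · exact absurd (P.trans _ _ _ hby hya) hab⟩
  haveI : IsPreorder (Fin n) r := ⟨⟩
  haveI : IsPartialOrder (Fin n) r := ⟨⟩
  obtain ⟨s, hs, hrs⟩ := extend_partialOrder r
  haveI hs' : IsLinearOrder (Fin n) s := hs
  haveI : IsTrans (Fin n) s := hs'.toIsPartialOrder.toIsPreorder.toIsTrans
  haveI : IsAntisymm (Fin n) s := hs'.toIsPartialOrder.toAntisymm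
  haveI : IsTotal (Fin n) s := hs'.toTotal
  haveI : DecidableRel s := Classical.decRel s
  set l : List (Fin n) := Finset.univ.sort s with hl
  have hlen : l.length = n := by
    rw [hl, Finset.length_sort, Finset.card_univ, Fintype.card_fin]
  have hnd : l.Nodup := Finset.sort_nodup _ _
  set f : Fin n → Fin n := fun k => l.get (Fin.cast hlen.symm k) with hf
  have hinj : Function.Injective f := by
    intro x y hxy
    have := (List.nodup_iff_injective_get).mp hnd hxy
    exact Fin.ext (by simpa using congrArg Fin.val this)
  let e : Equiv.Perm (Fin n) := Equiv.ofBijective f (Finite.injective_iff_bijective.mp hinj)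
  have hfe : ∀ x, f (e.symm x) = x := fun x => e.apply_symm_apply x
  have hmono : ∀ x y : Fin n, s x y → e.symm x ≤ e.symm y := by
    intro x y hxy
    rcases le_or_gt (e.symm x) (e.symm y) with h' | h'
    · exact h'
    · exfalso
      have hsort : l.Pairwise s := Finset.pairwise_sort _ _
      have := List.pairwise_iff_get.mp hsort (Fin.cast hlen.symm (e.symm y))
        (Fin.cast hlen.symm (e.symm x)) (by rw [Fin.lt_def, Fin.coe_cast, Fin.coe_cast]; exact Fin.lt_def.mp h')
      have hyx : s y x := by rw [← hfe x, ← hfe y]; exact this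
      have : x = y := antisymm hxy hyx
      rw [this] at h'
      exact absurd h' (lt_irrefl _)
  refine ⟨e.symm, ?_, ?_⟩
  · intro i j hij
    exact hmono i j (hrs i j (Or.inl hij))
  · exact hmono a b (hrs a b (Or.inr ⟨P.refl a, P.refl b⟩))


lemma count_le {n : ℕ} (γ : Equiv.Perm (Fin n)) (k : Fin n) :
    (γ k : ℕ) + 1 = Set.ncard {x : Fin n | γ x ≤ γ k} := by
  have himg : {x : Fin n | γ x ≤ γ k} = (γ.symm : Fin n → Fin n) '' (Set.Iic (γ k)) := by
    ext x
    constructor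
    · intro hx
      exact ⟨γ x, hx, by simp⟩
    · rintro ⟨y, hy, rfl⟩
      simpa using hy
  rw [himg, Set.ncard_image_of_injective _ γ.symm.injective, ← Finset.coe_Iic,
    Set.ncard_coe_finset, Fin.card_Iic]

/-- If `Σ_L(P) = [δ, η]_L`, then (writing values 1-based) for each `k`,
`δ(k) = #{x : x ≼_P k, or x incomparable to k and x < k}` and
`η(k) = #{x : x ≼_P k, or x incomparable to k and x > k}`. -/
theorem stmt10 (n : ℕ) (P : FinPoset n) (δ η : Equiv.Perm (Fin n))
    (hle : leL δ η) (hI : SigmaL P = intervalL δ η) (k : Fin n) :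
    ((δ k : ℕ) + 1 =
      Set.ncard {x : Fin n | P.le x k ∨ (¬ Cmp P x k ∧ x < k)}) ∧
    ((η k : ℕ) + 1 =
      Set.ncard {x : Fin n | P.le x k ∨ (¬ Cmp P x k ∧ k < x)}) := by
  have hdP : δ ∈ SigmaL P := by
    rw [hI]; exact ⟨Relation.ReflTransGen.refl, hle⟩
  have heP : η ∈ SigmaL P := by
    rw [hI]; exact ⟨hle, Relation.ReflTransGen.refl⟩
  have hlow : ∀ σ ∈ SigmaL P, invSet δ ⊆ invSet σ := by
    intro σ hσ
    rw [hI] at hσ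
    exact leL_subset hσ.1
  have hhigh : ∀ σ ∈ SigmaL P, invSet σ ⊆ invSet η := by
    intro σ hσ
    rw [hI] at hσ
    exact leL_subset hσ.2
  have K1 : ∀ x y : Fin n, ¬ Cmp P x y → x < y → δ x < δ y := by
    intro x y hnc hxy
    have hnb : ¬ P.le y x := fun hc => hnc (Or.inr hc)
    obtain ⟨σ, hσ, hσxy⟩ := exists_ext P x y hnb
    have hnotin : (x, y) ∉ invSet σ := by
      rw [mem_invSet]
      rintro ⟨-, hlt⟩
      exact absurd hσxy (not_le_of_gt hlt)
    have hnd : (x, y) ∉ invSet δ := fun hc => hnotin (hlow σ hσ hc)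
    rw [mem_invSet] at hnd
    push_neg at hnd
    have hle' := hnd hxy
    rcases lt_or_eq_of_le hle' with h' | h'
    · exact h'
    · exact absurd (δ.injective h') (ne_of_lt hxy)
  have K2 : ∀ x y : Fin n, ¬ Cmp P x y → x < y → η y < η x := by
    intro x y hnc hxy
    have hnb : ¬ P.le x y := fun hc => hnc (Or.inl hc)
    obtain ⟨σ, hσ, hσyx⟩ := exists_ext P y x hnb
    have hlt : σ y < σ x := by
      rcases lt_or_eq_of_le hσyx with h' | h'
      · exact h'
      · exact absurd (σ.injective h') (ne_of_gt hxy)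
    have : (x, y) ∈ invSet σ := mem_invSet.mpr ⟨hxy, hlt⟩
    have := hhigh σ hσ this
    rw [mem_invSet] at this
    exact this.2
  have hCmpSymm : ∀ x y : Fin n, ¬ Cmp P x y → ¬ Cmp P y x := by
    intro x y h hc
    exact h (hc.elim Or.inr Or.inl)
  constructor
  · have hset : {x : Fin n | P.le x k ∨ (¬ Cmp P x k ∧ x < k)} = {x : Fin n | δ x ≤ δ k} := by
      ext x
      simp only [Set.mem_setOf_eq]
      constructor
      · rintro (h | ⟨hnc, hlt⟩)
        · exact hdP x k h
        · exact le_of_lt (K1 x k hnc hlt)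
      · intro hxk
        by_cases hxe : x = k
        · exact Or.inl (hxe ▸ P.refl x)
        by_cases h1 : P.le x k
        · exact Or.inl h1
        by_cases h2 : P.le k x
        · exact absurd (δ.injective (le_antisymm hxk (hdP k x h2))) hxe
        have hnc : ¬ Cmp P x k := by rintro (h | h) <;> [exact h1 h; exact h2 h]
        rcases lt_or_gt_of_ne hxe with hlt | hgt
        · exact Or.inr ⟨hnc, hlt⟩
        · exact absurd (K1 k x (hCmpSymm x k hnc) hgt) (not_lt_of_ge hxk)
    rw [hset]
    exact count_le δ k
  · have hset : {x : Fin n | P.le x k ∨ (¬ Cmp P x k ∧ k < x)} = {x : Fin n | η x ≤ η k} := by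
      ext x
      simp only [Set.mem_setOf_eq]
      constructor
      · rintro (h | ⟨hnc, hlt⟩)
        · exact heP x k h
        · exact le_of_lt (K2 k x (hCmpSymm x k hnc) hlt)
      · intro hxk
        by_cases hxe : x = k
        · exact Or.inl (hxe ▸ P.refl x)
        by_cases h1 : P.le x k
        · exact Or.inl h1
        by_cases h2 : P.le k x
        · exact absurd (η.injective (le_antisymm hxk (heP k x h2))) hxe
        have hnc : ¬ Cmp P x k := by rintro (h | h) <;> [exact h1 h; exact h2 h]
        rcases lt_or_gt_of_ne hxe with hlt | hgt
        · exact absurd (K2 x k hnc hlt) (not_lt_of_ge hxk)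
        · exact Or.inr ⟨hnc, hgt⟩
    rw [hset]
    exact count_le η k
end

section
/- Let I = [σ, ρ]_L be a left weak Bruhat interval in S_n whose corresponding regular poset P_I (the unique regular poset with Σ_L(P_I) = I) contains i and i+1 as a comparable pair that is not a covering pair. Then Σ_L(s_i · P_I) = I s_i := {γ s_i : γ ∈ I}, and in particular I s_i is again a left weak Bruhat interval, namely [σ s_i, ρ s_i]_L. -/
namespace Stmt11Aux
open Finset

variable {n : ℕ}

@[simp] lemma perm_inv_apply_self (w : Equiv.Perm (Fin n)) (x : Fin n) : w⁻¹ (w x) = x := by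
  simp only [Equiv.Perm.coe_inv, Equiv.symm_apply_apply]

@[simp] lemma perm_apply_inv_self (w : Equiv.Perm (Fin n)) (x : Fin n) : w (w⁻¹ x) = x := by
  simp only [Equiv.Perm.coe_inv, Equiv.apply_symm_apply]

/-- The number of inversions of a permutation. -/
def N (w : Equiv.Perm (Fin n)) : ℕ :=
  ((Finset.univ : Finset (Fin n × Fin n)).filter fun p => p.1 < p.2 ∧ w p.2 < w p.1).card

lemma adj_val {j : ℕ} (hj : j + 1 < n) (x : Fin n) :
    (adj n j hj x).val = if x.val = j then j + 1 else if x.val = j + 1 then j else x.val := by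
  rw [adj, Equiv.swap_apply_def]
  split_ifs <;> simp_all [Fin.ext_iff]

lemma adj_lt_adj {j : ℕ} (hj : j + 1 < n) {a b : Fin n}
    (h1 : ¬(a.val = j ∧ b.val = j + 1)) (h2 : ¬(a.val = j + 1 ∧ b.val = j)) :
    adj n j hj a < adj n j hj b ↔ a < b := by
  rw [Fin.lt_def, Fin.lt_def, adj_val, adj_val]
  split_ifs <;> omega

lemma adj_mul_self {j : ℕ} (hj : j + 1 < n) : adj n j hj * adj n j hj = 1 :=
  Equiv.swap_mul_self _ _

lemma adj_inv {j : ℕ} (hj : j + 1 < n) : (adj n j hj)⁻¹ = adj n j hj :=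
  Equiv.swap_inv _ _

lemma adj_u {j : ℕ} (hj : j + 1 < n) :
    adj n j hj ⟨j, Nat.lt_of_succ_lt hj⟩ = ⟨j + 1, hj⟩ := Equiv.swap_apply_left _ _

lemma adj_v {j : ℕ} (hj : j + 1 < n) :
    adj n j hj ⟨j + 1, hj⟩ = ⟨j, Nat.lt_of_succ_lt hj⟩ := Equiv.swap_apply_right _ _

lemma N_one : N (1 : Equiv.Perm (Fin n)) = 0 := by
  rw [N, Finset.card_eq_zero, Finset.filter_eq_empty_iff]
  rintro p -
  simp only [Equiv.Perm.one_apply]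
  rintro ⟨h1, h2⟩
  exact absurd (h1.trans h2) (lt_irrefl _)
lemma N_mul_of_lt {j : ℕ} (hj : j + 1 < n) (w : Equiv.Perm (Fin n))
    (hA : w⁻¹ ⟨j, Nat.lt_of_succ_lt hj⟩ < w⁻¹ ⟨j + 1, hj⟩) :
    N (adj n j hj * w) = N w + 1 := by
  set u : Fin n := ⟨j, Nat.lt_of_succ_lt hj⟩ with hu
  set v : Fin n := ⟨j + 1, hj⟩ with hv
  set s := adj n j hj with hs
  have key : ((Finset.univ : Finset (Fin n × Fin n)).filter
        fun p => p.1 < p.2 ∧ (s * w) p.2 < (s * w) p.1)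
      = insert (w⁻¹ u, w⁻¹ v)
          ((Finset.univ : Finset (Fin n × Fin n)).filter
            fun p => p.1 < p.2 ∧ w p.2 < w p.1) := by
    ext p
    rw [mem_insert, mem_filter, mem_filter]
    simp only [mem_insert, mem_filter, mem_univ, true_and, Equiv.Perm.mul_apply,
      Prod.ext_iff]
    constructor
    · rintro ⟨hlt, hinv⟩
      by_cases h1 : w p.1 = u ∧ w p.2 = v
      · left
        constructor
        · rw [← h1.1, perm_inv_apply_self]
        · rw [← h1.2, perm_inv_apply_self]
      · by_cases h2 : w p.1 = v ∧ w p.2 = u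
        · exfalso
          rw [h2.1, h2.2, hs, adj_u, adj_v] at hinv
          exact absurd hinv (by simp [hu, hv, Fin.lt_def])
        · right
          refine ⟨hlt, ?_⟩
          rw [hs, adj_lt_adj hj ?_ ?_] at hinv
          · exact hinv
          · rintro ⟨ha, hb⟩
            exact h2 ⟨Fin.ext hb, Fin.ext ha⟩
          · rintro ⟨ha, hb⟩
            exact h1 ⟨Fin.ext hb, Fin.ext ha⟩
    · rintro (⟨hp1, hp2⟩ | ⟨hlt, hinv⟩)
      · rw [hp1, hp2]
        refine ⟨hA, ?_⟩
        rw [perm_apply_inv_self, perm_apply_inv_self, hs, adj_u, adj_v]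
        simp [hu, hv, Fin.lt_def]
      · refine ⟨hlt, ?_⟩
        have h1 : ¬((w p.2).val = j ∧ (w p.1).val = j + 1) := by
          rintro ⟨ha, hb⟩
          have e1 : p.2 = w⁻¹ u := by
            have : w p.2 = u := Fin.ext ha
            rw [← this, perm_inv_apply_self]
          have e2 : p.1 = w⁻¹ v := by
            have : w p.1 = v := Fin.ext hb
            rw [← this, perm_inv_apply_self]
          rw [e1, e2] at hlt
          exact absurd (hA.trans hlt) (lt_irrefl _)
        have h2 : ¬((w p.2).val = j + 1 ∧ (w p.1).val = j) := by
          rintro ⟨ha, hb⟩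
          rw [Fin.lt_def, ha, hb] at hinv
          omega
        rw [hs, adj_lt_adj hj h1 h2]
        exact hinv
  have hnm : (w⁻¹ u, w⁻¹ v) ∉ ((Finset.univ : Finset (Fin n × Fin n)).filter
      fun p => p.1 < p.2 ∧ w p.2 < w p.1) := by
    simp only [mem_filter, mem_univ, true_and, perm_apply_inv_self]
    rintro ⟨-, hbad⟩
    exact absurd hbad (by simp [hu, hv, Fin.lt_def])
  rw [N, key, Finset.card_insert_of_notMem hnm, N]
lemma inv_ne {j : ℕ} (hj : j + 1 < n) (w : Equiv.Perm (Fin n)) :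
    w⁻¹ ⟨j, Nat.lt_of_succ_lt hj⟩ ≠ w⁻¹ ⟨j + 1, hj⟩ := by
  intro hEq
  have := w⁻¹.injective hEq
  simp [Fin.ext_iff] at this

lemma N_mul_of_gt {j : ℕ} (hj : j + 1 < n) (w : Equiv.Perm (Fin n))
    (hB : w⁻¹ ⟨j + 1, hj⟩ < w⁻¹ ⟨j, Nat.lt_of_succ_lt hj⟩) :
    N w = N (adj n j hj * w) + 1 := by
  have h1 : (adj n j hj * w)⁻¹ ⟨j, Nat.lt_of_succ_lt hj⟩ <
      (adj n j hj * w)⁻¹ ⟨j + 1, hj⟩ := by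
    simp only [mul_inv_rev, adj_inv, Equiv.Perm.mul_apply, adj_u, adj_v]
    exact hB
  have := N_mul_of_lt hj (adj n j hj * w) h1
  rwa [← mul_assoc, adj_mul_self, one_mul] at this

/-- If a permutation has no (value-)descent, it is the identity. -/
lemma eq_one_of_no_descent (w : Equiv.Perm (Fin n))
    (hw : ∀ j : ℕ, ∀ hj : j + 1 < n,
      w⁻¹ ⟨j, Nat.lt_of_succ_lt hj⟩ < w⁻¹ ⟨j + 1, hj⟩) : w = 1 := by
  have hsm : StrictMono (w⁻¹ : Equiv.Perm (Fin n)) := by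
    intro a b hab
    rcases a with ⟨a, ha⟩; rcases b with ⟨b, hb⟩
    rw [Fin.lt_def] at hab
    simp only at hab
    induction b with
    | zero => omega
    | succ k ih =>
      have hk : k + 1 < n := hb
      have step := hw k hk
      rcases Nat.lt_or_ge a k with hak | hak
      · exact (ih (Nat.lt_of_succ_lt hb) hak).trans step
      · have : a = k := by omega
        subst this
        exact step
  haveI : WellFoundedLT (Fin n) := Finite.to_wellFoundedLT
  have hsm2 : StrictMono (w : Equiv.Perm (Fin n)) := by
    intro a b hab
    rcases lt_trichotomy (w a) (w b) with h | h | h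
    · exact h
    · exact absurd (w.injective h) (ne_of_lt hab)
    · have := hsm h
      simp only [perm_inv_apply_self] at this
      exact absurd (this.trans hab) (lt_irrefl _)
  ext x
  have h1 : x ≤ w x := hsm2.le_apply
  have h2 : w x ≤ x := by
    have := hsm.le_apply (x := w x)
    simpa using this
  simp [le_antisymm h2 h1]

lemma exists_descent (w : Equiv.Perm (Fin n)) (hw : w ≠ 1) :
    ∃ j : ℕ, ∃ hj : j + 1 < n,
      w⁻¹ ⟨j + 1, hj⟩ < w⁻¹ ⟨j, Nat.lt_of_succ_lt hj⟩ := by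
  by_contra hcon
  push_neg at hcon
  refine hw (eq_one_of_no_descent w fun j hj => ?_)
  have := hcon j hj
  rcases lt_trichotomy (w⁻¹ ⟨j, Nat.lt_of_succ_lt hj⟩) (w⁻¹ ⟨j + 1, hj⟩) with h | h | h
  · exact h
  · exact absurd h (inv_ne hj w)
  · exact absurd h (not_lt.mpr this)

lemma exists_word : ∀ k : ℕ, ∀ w : Equiv.Perm (Fin n), N w = k →
    ∃ l : List (Equiv.Perm (Fin n)), (∀ π ∈ l, IsAdj n π) ∧ l.prod = w ∧ l.length = k := by
  intro k
  induction k using Nat.strong_induction_on with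
  | _ k ih =>
    intro w hw
    by_cases h1 : w = 1
    · subst h1
      rw [N_one] at hw
      exact ⟨[], by simp, by simp, by simp [← hw]⟩
    · obtain ⟨j, hj, hdes⟩ := exists_descent w h1
      have hN := N_mul_of_gt hj w hdes
      have hk : k = N (adj n j hj * w) + 1 := by rw [← hw, hN]
      obtain ⟨l, hl1, hl2, hl3⟩ := ih (N (adj n j hj * w)) (by omega) (adj n j hj * w) rfl
      refine ⟨adj n j hj :: l, ?_, ?_, ?_⟩
      · rintro π hπ
        rcases List.mem_cons.mp hπ with h | h
        · exact ⟨j, hj, h⟩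
        · exact hl1 π h
      · rw [List.prod_cons, hl2, ← mul_assoc, adj_mul_self, one_mul]
      · simp [hl3, hk]

lemma N_le_length : ∀ l : List (Equiv.Perm (Fin n)), (∀ π ∈ l, IsAdj n π) →
    N l.prod ≤ l.length := by
  intro l
  induction l with
  | nil => intro _; simp [N_one]
  | cons π t ih =>
    intro hl
    obtain ⟨j, hj, hπ⟩ := hl π List.mem_cons_self
    have ht := ih fun x hx => hl x (List.mem_cons_of_mem π hx)
    rw [List.prod_cons, hπ]
    rcases lt_trichotomy (t.prod⁻¹ ⟨j, Nat.lt_of_succ_lt hj⟩) (t.prod⁻¹ ⟨j + 1, hj⟩)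
      with h | h | h
    · rw [N_mul_of_lt hj t.prod h]
      simpa using ht
    · exact absurd h (inv_ne hj t.prod)
    · have := N_mul_of_gt hj t.prod h
      simp only [List.length_cons]
      omega

lemma len_eq_N (w : Equiv.Perm (Fin n)) : len w = N w := by
  have hne : {k | ∃ l : List (Equiv.Perm (Fin n)),
      (∀ π ∈ l, IsAdj n π) ∧ l.prod = w ∧ l.length = k}.Nonempty := by
    obtain ⟨l, h1, h2, h3⟩ := exists_word (N w) w rfl
    exact ⟨N w, l, h1, h2, h3⟩
  apply le_antisymm
  · obtain ⟨l, h1, h2, h3⟩ := exists_word (N w) w rfl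
    exact Nat.sInf_le ⟨l, h1, h2, h3⟩
  · obtain ⟨l, h1, h2, h3⟩ := Nat.sInf_mem hne
    rw [len, ← h3, ← h2]
    exact N_le_length l h1

/-- Characterisation of left descents. -/
lemma mem_desL_iff {j : ℕ} (hj : j + 1 < n) (w : Equiv.Perm (Fin n)) :
    j ∈ DesL w ↔ w⁻¹ ⟨j + 1, hj⟩ < w⁻¹ ⟨j, Nat.lt_of_succ_lt hj⟩ := by
  constructor
  · rintro ⟨h', hlen⟩
    have : adj n j h' = adj n j hj := rfl
    rw [this, len_eq_N, len_eq_N] at hlen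
    rcases lt_trichotomy (w⁻¹ ⟨j, Nat.lt_of_succ_lt hj⟩) (w⁻¹ ⟨j + 1, hj⟩) with h | h | h
    · rw [N_mul_of_lt hj w h] at hlen
      omega
    · exact absurd h (inv_ne hj w)
    · exact h
  · intro h
    refine ⟨hj, ?_⟩
    rw [len_eq_N, len_eq_N, N_mul_of_gt hj w h]
    omega
section Steps

variable {i : ℕ} {h : i + 1 < n}

/-- Ascents at position `i` persist downward along covers of left weak order. -/
lemma asc_of_cov {γ η : Equiv.Perm (Fin n)} (hc : covL γ η)
    (hη : η ⟨i, Nat.lt_of_succ_lt h⟩ < η ⟨i + 1, h⟩) :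
    γ ⟨i, Nat.lt_of_succ_lt h⟩ < γ ⟨i + 1, h⟩ := by
  obtain ⟨j, hj, hnd, rfl⟩ := hc
  have hnd' : γ⁻¹ ⟨j, Nat.lt_of_succ_lt hj⟩ < γ⁻¹ ⟨j + 1, hj⟩ := by
    rcases lt_trichotomy (γ⁻¹ ⟨j, Nat.lt_of_succ_lt hj⟩) (γ⁻¹ ⟨j + 1, hj⟩) with hh | hh | hh
    · exact hh
    · exact absurd hh (inv_ne hj γ)
    · exact absurd ((mem_desL_iff hj γ).mpr hh) hnd
  simp only [Equiv.Perm.mul_apply] at hη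
  by_cases h1 : (γ ⟨i, Nat.lt_of_succ_lt h⟩).val = j ∧ (γ ⟨i + 1, h⟩).val = j + 1
  · rw [Fin.lt_def, h1.1, h1.2]; omega
  · by_cases h2 : (γ ⟨i, Nat.lt_of_succ_lt h⟩).val = j + 1 ∧ (γ ⟨i + 1, h⟩).val = j
    · exfalso
      have e1 : γ⁻¹ ⟨j + 1, hj⟩ = ⟨i, Nat.lt_of_succ_lt h⟩ := by
        have : γ ⟨i, Nat.lt_of_succ_lt h⟩ = ⟨j + 1, hj⟩ := Fin.ext h2.1
        rw [← this, perm_inv_apply_self]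
      have e2 : γ⁻¹ ⟨j, Nat.lt_of_succ_lt hj⟩ = ⟨i + 1, h⟩ := by
        have : γ ⟨i + 1, h⟩ = ⟨j, Nat.lt_of_succ_lt hj⟩ := Fin.ext h2.2
        rw [← this, perm_inv_apply_self]
      rw [e1, e2, Fin.lt_def] at hnd'
      simp at hnd'
    · rwa [adj_lt_adj hj h1 h2] at hη

/-- Covers transport across right multiplication by `s_i`, provided the
`i`-ascent status agrees at the two endpoints. -/
lemma cov_mul_adj {γ η : Equiv.Perm (Fin n)} (hc : covL γ η)
    (hiff : (γ ⟨i, Nat.lt_of_succ_lt h⟩ < γ ⟨i + 1, h⟩ ↔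
       η ⟨i, Nat.lt_of_succ_lt h⟩ < η ⟨i + 1, h⟩)) :
    covL (γ * adj n i h) (η * adj n i h) := by
  obtain ⟨j, hj, hnd, rfl⟩ := hc
  have hnd' : γ⁻¹ ⟨j, Nat.lt_of_succ_lt hj⟩ < γ⁻¹ ⟨j + 1, hj⟩ := by
    rcases lt_trichotomy (γ⁻¹ ⟨j, Nat.lt_of_succ_lt hj⟩) (γ⁻¹ ⟨j + 1, hj⟩) with hh | hh | hh
    · exact hh
    · exact absurd hh (inv_ne hj γ)
    · exact absurd ((mem_desL_iff hj γ).mpr hh) hnd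
  refine ⟨j, hj, ?_, by rw [mul_assoc]⟩
  have hkey : adj n i h (γ⁻¹ ⟨j, Nat.lt_of_succ_lt hj⟩) <
      adj n i h (γ⁻¹ ⟨j + 1, hj⟩) := by
    rw [adj_lt_adj h ?_ ?_]
    · exact hnd'
    · rintro ⟨ha, hb⟩
      have e1 : γ ⟨i, Nat.lt_of_succ_lt h⟩ = ⟨j, Nat.lt_of_succ_lt hj⟩ := by
        have : γ⁻¹ ⟨j, Nat.lt_of_succ_lt hj⟩ = ⟨i, Nat.lt_of_succ_lt h⟩ := Fin.ext ha
        rw [← this, perm_apply_inv_self]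
      have e2 : γ ⟨i + 1, h⟩ = ⟨j + 1, hj⟩ := by
        have : γ⁻¹ ⟨j + 1, hj⟩ = ⟨i + 1, h⟩ := Fin.ext hb
        rw [← this, perm_apply_inv_self]
      have hascγ : γ ⟨i, Nat.lt_of_succ_lt h⟩ < γ ⟨i + 1, h⟩ := by
        rw [e1, e2, Fin.lt_def]; simp
      have hascη := hiff.mp hascγ
      simp only [Equiv.Perm.mul_apply, e1, e2, adj_u, adj_v, Fin.lt_def] at hascη
      omega
    · rintro ⟨ha, hb⟩
      rw [Fin.lt_def, ha, hb] at hnd'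
      omega
  intro hmem
  rw [mem_desL_iff hj] at hmem
  rw [mul_inv_rev, adj_inv] at hmem
  simp only [Equiv.Perm.mul_apply] at hmem
  exact absurd (hkey.trans hmem) (lt_irrefl _)

/-- Main transport lemma, ascent version. -/
lemma le_mul_adj_of_asc {γ δ : Equiv.Perm (Fin n)} (hle : leL γ δ)
    (hδ : δ ⟨i, Nat.lt_of_succ_lt h⟩ < δ ⟨i + 1, h⟩) :
    γ ⟨i, Nat.lt_of_succ_lt h⟩ < γ ⟨i + 1, h⟩ ∧ leL (γ * adj n i h) (δ * adj n i h) := by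
  induction hle using Relation.ReflTransGen.head_induction_on with
  | refl => exact ⟨hδ, Relation.ReflTransGen.refl⟩
  | head hc _ ih =>
    obtain ⟨ihasc, ihle⟩ := ih
    have hasc := asc_of_cov (h := h) hc ihasc
    exact ⟨hasc, Relation.ReflTransGen.head
      (cov_mul_adj hc (iff_of_true hasc ihasc)) ihle⟩

/-- Main transport lemma, descent version. -/
lemma le_mul_adj_of_dsc {γ δ : Equiv.Perm (Fin n)} (hle : leL γ δ)
    (hγ : ¬ γ ⟨i, Nat.lt_of_succ_lt h⟩ < γ ⟨i + 1, h⟩) :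
    leL (γ * adj n i h) (δ * adj n i h) := by
  induction hle using Relation.ReflTransGen.head_induction_on with
  | refl => exact Relation.ReflTransGen.refl
  | head hc hrest ih =>
    rename_i γ' η'
    have hη : ¬ η' ⟨i, Nat.lt_of_succ_lt h⟩ < η' ⟨i + 1, h⟩ := by
      intro hasc
      exact hγ (asc_of_cov (h := h) hc hasc)
    exact Relation.ReflTransGen.head (cov_mul_adj hc (iff_of_false hγ hη)) (ih hη)

end Steps

end Stmt11Aux

open Stmt11Aux

/-- Let `I = [σ, ρ]_L` with associated regular poset `P_I`
(`Σ_L(P_I) = I`), and suppose `i, i+1` are comparable but not a covering pair in `P_I`.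
Then `Σ_L(s_i · P_I) = I s_i`, and `I s_i = [σ s_i, ρ s_i]_L` is again an interval. -/
theorem stmt11 (n : ℕ) (σ ρ : Equiv.Perm (Fin n)) (hle : leL σ ρ)
    (P : FinPoset n) (hreg : Regular P) (hIP : SigmaL P = intervalL σ ρ)
    (i : ℕ) (h : i + 1 < n)
    (hcmp : Cmp P ⟨i, Nat.lt_of_succ_lt h⟩ ⟨i + 1, h⟩)
    (hnc₁ : ¬ Covers P ⟨i, Nat.lt_of_succ_lt h⟩ ⟨i + 1, h⟩)
    (hnc₂ : ¬ Covers P ⟨i + 1, h⟩ ⟨i, Nat.lt_of_succ_lt h⟩) :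
    SigmaL (permPoset (adj n i h) P) = (fun γ => γ * adj n i h) '' intervalL σ ρ ∧
      (fun γ => γ * adj n i h) '' intervalL σ ρ =
        intervalL (σ * adj n i h) (ρ * adj n i h) := by
  classical
  have hss : ∀ γ : Equiv.Perm (Fin n), γ * adj n i h * adj n i h = γ := fun γ => by
    rw [mul_assoc, adj_mul_self, mul_one]
  have hne : ∀ γ : Equiv.Perm (Fin n),
      γ ⟨i, Nat.lt_of_succ_lt h⟩ ≠ γ ⟨i + 1, h⟩ := by
    intro γ hEq
    have := γ.injective hEq
    simp [Fin.ext_iff] at this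
  constructor
  · -- Part 1
    rw [← hIP]
    ext δ
    constructor
    · intro hδ
      refine ⟨δ * adj n i h, ?_, hss δ⟩
      intro a b hab
      have hP : (permPoset (adj n i h) P).le (adj n i h a) (adj n i h b) := by
        show P.le ((adj n i h)⁻¹ (adj n i h a)) ((adj n i h)⁻¹ (adj n i h b))
        simpa [perm_inv_apply_self] using hab
      have := hδ _ _ hP
      simpa [Equiv.Perm.mul_apply] using this
    · rintro ⟨γ, hγ, rfl⟩
      intro a b hab
      have hab' : P.le (adj n i h a) (adj n i h b) := by
        have : (adj n i h)⁻¹ = adj n i h := adj_inv h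
        rw [← this]
        exact hab
      have := hγ _ _ hab'
      simpa [Equiv.Perm.mul_apply] using this
  · -- Part 2
    have hσI : σ ∈ intervalL σ ρ := ⟨Relation.ReflTransGen.refl, hle⟩
    have hρI : ρ ∈ intervalL σ ρ := ⟨hle, Relation.ReflTransGen.refl⟩
    rcases hcmp with hA | hB
    · -- case i ≼_P i+1 : every element of I is ascending at i
      have hasc : ∀ γ ∈ intervalL σ ρ,
          γ ⟨i, Nat.lt_of_succ_lt h⟩ < γ ⟨i + 1, h⟩ := by
        intro γ hγ
        rw [← hIP] at hγ
        exact lt_of_le_of_ne (hγ _ _ hA) (hne γ)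
      ext δ
      constructor
      · rintro ⟨γ, hγI, rfl⟩
        exact ⟨(le_mul_adj_of_asc (h := h) hγI.1 (hasc γ hγI)).2,
          (le_mul_adj_of_asc (h := h) hγI.2 (hasc ρ hρI)).2⟩
      · rintro ⟨h1, h2⟩
        have dscσs : ¬ (σ * adj n i h) ⟨i, Nat.lt_of_succ_lt h⟩ <
            (σ * adj n i h) ⟨i + 1, h⟩ := by
          simp only [Equiv.Perm.mul_apply, adj_u, adj_v]
          exact fun hx => absurd (hx.trans (hasc σ hσI)) (lt_irrefl _)
        have dscδ : ¬ δ ⟨i, Nat.lt_of_succ_lt h⟩ < δ ⟨i + 1, h⟩ := by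
          intro hx
          exact dscσs (le_mul_adj_of_asc (h := h) h1 hx).1
        have h1' := le_mul_adj_of_dsc (h := h) h1 dscσs
        rw [hss σ] at h1'
        have h2' := le_mul_adj_of_dsc (h := h) h2 dscδ
        rw [hss ρ] at h2'
        exact ⟨δ * adj n i h, ⟨h1', h2'⟩, hss δ⟩
    · -- case i+1 ≼_P i : every element of I is descending at i
      have hdsc : ∀ γ ∈ intervalL σ ρ,
          ¬ γ ⟨i, Nat.lt_of_succ_lt h⟩ < γ ⟨i + 1, h⟩ := by
        intro γ hγ
        rw [← hIP] at hγ
        exact not_lt.mpr (hγ _ _ hB)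
      ext δ
      constructor
      · rintro ⟨γ, hγI, rfl⟩
        exact ⟨le_mul_adj_of_dsc (h := h) hγI.1 (hdsc σ hσI),
          le_mul_adj_of_dsc (h := h) hγI.2 (hdsc γ hγI)⟩
      · rintro ⟨h1, h2⟩
        have ascρs : (ρ * adj n i h) ⟨i, Nat.lt_of_succ_lt h⟩ <
            (ρ * adj n i h) ⟨i + 1, h⟩ := by
          simp only [Equiv.Perm.mul_apply, adj_u, adj_v]
          exact lt_of_le_of_ne (not_lt.mp (hdsc ρ hρI)) (Ne.symm (hne ρ))
        obtain ⟨ascδ, h2'⟩ := le_mul_adj_of_asc (h := h) h2 ascρs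
        rw [hss ρ] at h2'
        obtain ⟨-, h1'⟩ := le_mul_adj_of_asc (h := h) h1 ascδ
        rw [hss σ] at h1'
        exact ⟨δ * adj n i h, ⟨h1', h2'⟩, hss δ⟩
end
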